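/- arXiv:2405.11428 — 7 statements merged into one kernel-verified Lean document; each statement's English description precedes it below -/
import Mathlib

section
/- Let α ≥ 6 be an even integer and let s_α > 0 be a minimizer of the function t ↦ Σ_{n∈ℤ} t·f_α(t n) over t > 0. Then s_α > 1. -/
/-- The lattice energy `t ↦ Σ_{n∈ℤ} t·f_α(t n)` with `f_α(x) = 1/(1+x^α)`. -/
noncomputable def latticeEnergy (α : ℕ) (t : ℝ) : ℝ :=
  ∑' n : ℤ, t * (1 / (1 + (t * (n : ℝ)) ^ α))

namespace Stmt7
open Finset MeasureTheory Set

noncomputable def f (α : ℕ) (x : ℝ) : ℝ := 1 / (1 + x ^ α)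
noncomputable def F (α : ℕ) (t : ℝ) : ℝ := ∑' n : ℕ, f α (t * (n + 1))

variable {α : ℕ} {x y c t : ℝ}

lemma denom_pos (hx : 0 ≤ x) : 0 < 1 + x ^ α := by positivity
lemma denom_pos' (hα : Even α) (x : ℝ) : 0 < 1 + x ^ α := by
  have := hα.pow_nonneg x; linarith
lemma f_nonneg (hx : 0 ≤ x) : 0 ≤ f α x := by unfold f; positivity
lemma f_le_one (hx : 0 ≤ x) : f α x ≤ 1 := by
  rw [f, div_le_one (denom_pos hx)]; nlinarith [pow_nonneg hx α]
lemma f_anti (hx : 0 ≤ x) (hxy : x ≤ y) : f α y ≤ f α x := by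
  apply one_div_le_one_div_of_le (denom_pos hx)
  have := pow_le_pow_left₀ hx hxy α
  linarith
lemma f_ub_inv_sq (h2 : 2 ≤ α) (hx : 1 ≤ x) : f α x ≤ (x ^ 2)⁻¹ := by
  have h1 : x ^ 2 ≤ x ^ α := pow_le_pow_right₀ hx h2
  rw [f, div_eq_inv_mul, mul_one]
  apply inv_anti₀ (by positivity)
  linarith
lemma f_ub_inv_six (h6 : 6 ≤ α) (hx : 1 ≤ x) : f α x ≤ (x ^ 6)⁻¹ := by
  have h1 : x ^ 6 ≤ x ^ α := pow_le_pow_right₀ hx h6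
  rw [f, div_eq_inv_mul, mul_one]
  apply inv_anti₀ (by positivity)
  linarith

/-- lower bound via exponent 6, for x ≤ c ≤ 1 -/
lemma f_lb6 (h6 : 6 ≤ α) (hx : 0 ≤ x) (hxc : x ≤ c) (hc : c ≤ 1) :
    1 / (1 + c ^ 6) ≤ f α x := by
  have hc0 : 0 ≤ c := hx.trans hxc
  have h1 : x ^ α ≤ c ^ α := pow_le_pow_left₀ hx hxc α
  have h2 : c ^ α ≤ c ^ 6 := pow_le_pow_of_le_one hc0 hc h6
  apply one_div_le_one_div_of_le (denom_pos hx)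
  linarith

/-- lower bound 1 - c^α for x ≤ c -/
lemma f_lb_poly (hx : 0 ≤ x) (hxc : x ≤ c) : 1 - c ^ α ≤ f α x := by
  have h1 : x ^ α ≤ c ^ α := pow_le_pow_left₀ hx hxc α
  have h2 : 0 ≤ x ^ α := pow_nonneg hx α
  rw [f, le_div_iff₀ (denom_pos hx)]
  nlinarith

/-- lower bound via f at c, any c with x ≤ c -/
lemma f_lb_pt (hx : 0 ≤ x) (hxc : x ≤ c) : 1 / (1 + c ^ α) ≤ f α x :=
  f_anti hx hxc

/-- upper bound via exponent 6 for x ≥ c ≥ 1 -/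
lemma f_ub6 (h6 : 6 ≤ α) (hc : 1 ≤ c) (hcx : c ≤ x) : f α x ≤ 1 / (1 + c ^ 6) := by
  have hc0 : (0:ℝ) ≤ c := by linarith
  have h1 : c ^ α ≤ x ^ α := pow_le_pow_left₀ hc0 hcx α
  have h2 : c ^ 6 ≤ c ^ α := pow_le_pow_right₀ hc h6
  apply one_div_le_one_div_of_le (by positivity)
  linarith

lemma f_ub_pt (hc : 0 ≤ c) (hcx : c ≤ x) : f α x ≤ 1 / (1 + c ^ α) :=
  f_anti hc hcx

lemma summable_base : Summable (fun n : ℕ => ((((n:ℝ) + 1)) ^ 2)⁻¹) := by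
  have := Real.summable_one_div_nat_pow.mpr (one_lt_two)
  rw [← summable_nat_add_iff 1] at this
  simpa [one_div] using this

lemma summable_f (h2 : 2 ≤ α) (ht : 0 < t) :
    Summable (fun n : ℕ => f α (t * (n + 1))) := by
  apply Summable.of_nonneg_of_le
    (fun n => f_nonneg (by positivity))
    (fun n => ?_) (summable_base.mul_left (1 + (t⁻¹) ^ 2))
  set P : ℝ := (n:ℝ) + 1 with hP
  have hP0 : (0:ℝ) < P := by positivity
  have hu0 : (0:ℝ) < (P ^ 2)⁻¹ := by positivity
  have hu : P ^ 2 * (P ^ 2)⁻¹ = 1 := mul_inv_cancel₀ (by positivity)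
  have hti : (0:ℝ) < (t⁻¹) ^ 2 := by positivity
  rcases le_or_gt (t * P) 1 with h | h
  · have hf := f_le_one (α := α) (x := t * P) (by positivity)
    have htP : t ^ 2 * P ^ 2 ≤ 1 := by nlinarith [mul_pos ht hP0]
    have hPt : P ^ 2 ≤ (t⁻¹) ^ 2 := by
      have hne : t ≠ 0 := ne_of_gt ht
      calc P ^ 2 = (t ^ 2 * P ^ 2) * (t⁻¹) ^ 2 := by field_simp
        _ ≤ 1 * (t⁻¹) ^ 2 := mul_le_mul_of_nonneg_right htP (le_of_lt hti)
        _ = (t⁻¹) ^ 2 := by ring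
    nlinarith [mul_le_mul_of_nonneg_right hPt (le_of_lt hu0)]
  · have hf := f_ub_inv_sq h2 (le_of_lt h)
    have heq : ((t * P) ^ 2)⁻¹ = (t⁻¹) ^ 2 * (P ^ 2)⁻¹ := by
      rw [mul_pow, mul_inv, inv_pow]
    rw [heq] at hf
    nlinarith [hf]

lemma F_nonneg (ht : 0 < t) : 0 ≤ F α t :=
  tsum_nonneg fun n => f_nonneg (by positivity)

lemma sum_le_F (h2 : 2 ≤ α) (ht : 0 < t) (K : ℕ) :
    ∑ j ∈ range K, f α (t * (j + 1)) ≤ F α t :=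
  Summable.sum_le_tsum _ (fun i _ => f_nonneg (by positivity)) (summable_f h2 ht)


lemma energy_eq (hα : Even α) (h2 : 2 ≤ α) (ht : 0 < t) :
    latticeEnergy α t = t + 2 * t * F α t := by
  have hα0 : α ≠ 0 := by rintro rfl; omega
  have hs : Summable (fun n : ℕ => f α (t * (n + 1))) := summable_f h2 ht
  set g : ℤ → ℝ := fun n => t * (1 / (1 + (t * (n : ℝ)) ^ α)) with hg
  have e1 : (fun n : ℕ => g (n + 1)) = fun n : ℕ => t * f α (t * (n + 1)) := by
    funext n
    simp only [hg, f]
    push_cast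
    ring_nf
  have e2 : (fun n : ℕ => g (-(n + 1))) = fun n : ℕ => t * f α (t * (n + 1)) := by
    funext n
    simp only [hg, f]
    have harg : t * ((-((n:ℕ) + 1) : ℤ) : ℝ) = -(t * ((n:ℝ) + 1)) := by push_cast; ring
    rw [harg, hα.neg_pow]
  have hs1 : Summable (fun n : ℕ => g (n + 1)) := by rw [e1]; exact hs.mul_left t
  have hs2 : Summable (fun n : ℕ => g (-(n + 1))) := by rw [e2]; exact hs.mul_left t
  have hsn : Summable (fun n : ℕ => g n) := by
    rw [← summable_nat_add_iff 1]
    exact_mod_cast hs1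
  have key : ∑' n : ℤ, g n = ∑' n : ℕ, g n + ∑' n : ℕ, g (-(n + 1)) :=
    tsum_of_nat_of_neg_add_one hsn hs2
  have h0 : g 0 = t := by
    simp only [hg]
    norm_num [zero_pow hα0]
  have hsplit : ∑' n : ℕ, g n = g 0 + ∑' n : ℕ, g (n + 1) := by
    rw [Summable.tsum_eq_zero_add hsn]
    push_cast
    norm_num
  have htF1 : ∑' n : ℕ, g (n + 1) = t * F α t := by
    rw [e1, F, ← tsum_mul_left]
  have htF2 : ∑' n : ℕ, g (-(n + 1)) = t * F α t := by
    rw [e2, F, ← tsum_mul_left]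
  show ∑' n : ℤ, g n = t + 2 * t * F α t
  rw [key, hsplit, h0, htF1, htF2]
  ring


/-- Key block comparison -/
lemma block_bound (h2 : 2 ≤ α) (ht : 0 < t) {M : ℕ} (hM : 1 ≤ M) :
    ∑ j ∈ range M, f α (t * (j + 1)) + (M : ℝ) * (F α ((M:ℝ) * t) - f α ((M:ℝ) * t))
      ≤ F α t := by
  have hM0 : (0:ℝ) < (M:ℝ) := by exact_mod_cast hM
  have hMt : (0:ℝ) < (M:ℝ) * t := by positivity
  -- partial sums claim
  have key : ∀ N : ℕ, ∑ j ∈ range M, f α (t * (j + 1))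
      + (M:ℝ) * ∑ k ∈ range N, f α ((M:ℝ) * t * (k + 2)) ≤ ∑ n ∈ range (M * (N + 1)), f α (t * (n + 1)) := by
    intro N
    induction N with
    | zero => simp
    | succ N ih =>
      have hsplit : ∑ n ∈ range (M * (N + 2)), f α (t * (n + 1))
          = ∑ n ∈ range (M * (N + 1)), f α (t * (n + 1))
            + ∑ j ∈ range M, f α (t * ((M * (N + 1) + j : ℕ) + 1)) := by
        have e : M * (N + 2) = M * (N + 1) + M := by ring
        rw [e, Finset.sum_range_add]
      have hblock : (M:ℝ) * f α ((M:ℝ) * t * ((N:ℝ) + 2))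
          ≤ ∑ j ∈ range M, f α (t * ((M * (N + 1) + j : ℕ) + 1)) := by
        have : ∀ j ∈ range M, f α ((M:ℝ) * t * ((N:ℝ) + 2)) ≤ f α (t * ((M * (N + 1) + j : ℕ) + 1)) := by
          intro j hj
          apply f_anti (by positivity)
          have hjM : (j:ℝ) + 1 ≤ (M:ℝ) := by
            have := mem_range.mp hj
            exact_mod_cast Nat.succ_le_of_lt this
          have : ((M * (N + 1) + j : ℕ) : ℝ) + 1 ≤ (M:ℝ) * ((N:ℝ) + 2) := by
            push_cast
            nlinarith
          calc t * ((M * (N + 1) + j : ℕ) + 1) ≤ t * ((M:ℝ) * ((N:ℝ) + 2)) := by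
                apply mul_le_mul_of_nonneg_left this (le_of_lt ht)
            _ = (M:ℝ) * t * ((N:ℝ) + 2) := by ring
        calc (M:ℝ) * f α ((M:ℝ) * t * ((N:ℝ) + 2))
            = ∑ _j ∈ range M, f α ((M:ℝ) * t * ((N:ℝ) + 2)) := by
              rw [Finset.sum_const, card_range, nsmul_eq_mul]
          _ ≤ _ := Finset.sum_le_sum this
      rw [hsplit, Finset.sum_range_succ]
      push_cast at hblock ih ⊢
      linarith [hblock, ih]
  -- pass to the limit
  have hsum2 : Summable (fun k : ℕ => f α ((M:ℝ) * t * (k + 2))) := by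
    have := summable_f h2 hMt
    rw [← summable_nat_add_iff 1] at this
    convert this using 2 with k
    · rfl
    push_cast
    ring_nf
  have hF2 : ∑' k : ℕ, f α ((M:ℝ) * t * (k + 2)) = F α ((M:ℝ) * t) - f α ((M:ℝ) * t) := by
    have h01 : F α ((M:ℝ) * t) = f α ((M:ℝ) * t * (0 + 1))
        + ∑' k : ℕ, f α ((M:ℝ) * t * ((k + 1) + 1)) := by
      rw [F, Summable.tsum_eq_zero_add (summable_f h2 hMt)]
      push_cast
      norm_num
    rw [show ∀ x:ℝ, x * (0+1) = x from fun x => by ring] at h01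
    have : (fun k : ℕ => f α ((M:ℝ) * t * (k + 2))) = fun k : ℕ => f α ((M:ℝ) * t * ((k+1) + 1)) := by
      funext k; ring_nf
    rw [this, h01]
    ring
  have hbd : ∀ N : ℕ, ∑ k ∈ range N, f α ((M:ℝ) * t * (k + 2))
      ≤ (F α t - ∑ j ∈ range M, f α (t * (j + 1))) / (M:ℝ) := by
    intro N
    rw [le_div_iff₀ hM0]
    have h3 := (key N).trans (sum_le_F h2 ht (M * (N+1)))
    linarith
  have := Real.tsum_le_of_sum_range_le (fun n => f_nonneg (by positivity)) hbd
  rw [hF2, div_eq_inv_mul] at this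
  have h4 := mul_le_mul_of_nonneg_left this (le_of_lt hM0)
  rw [← mul_assoc, mul_inv_cancel₀ (ne_of_gt hM0), one_mul] at h4
  linarith


/-- If the condition holds, scaling up by M strictly decreases the energy. -/
lemma energy_scale_lt (hα : Even α) (h2 : 2 ≤ α) (ht : 0 < t) {M : ℕ} (hM : 1 ≤ M)
    (hcond : (M:ℝ) * f α ((M:ℝ) * t) + ((M:ℝ) - 1) / 2 < ∑ j ∈ range M, f α (t * (j + 1))) :
    latticeEnergy α ((M:ℝ) * t) < latticeEnergy α t := by
  have hM0 : (0:ℝ) < (M:ℝ) := by exact_mod_cast hM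
  have hMt : (0:ℝ) < (M:ℝ) * t := by positivity
  rw [energy_eq hα h2 ht, energy_eq hα h2 hMt]
  have hbb := block_bound h2 ht hM
  have h1 : 2 * t * (∑ j ∈ range M, f α (t * (j + 1))
      + (M : ℝ) * (F α ((M:ℝ) * t) - f α ((M:ℝ) * t))) ≤ 2 * t * F α t :=
    mul_le_mul_of_nonneg_left hbb (by positivity)
  have h2' : 2 * t * ((M:ℝ) * f α ((M:ℝ) * t) + ((M:ℝ) - 1) / 2)
      < 2 * t * ∑ j ∈ range M, f α (t * (j + 1)) :=
    mul_lt_mul_of_pos_left hcond (by positivity)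
  nlinarith [h1, h2']


lemma f_continuous (hα : Even α) : Continuous (f α) := by
  apply Continuous.div continuous_const
  · continuity
  · intro x; exact ne_of_gt (denom_pos' hα x)

lemma integrableOn_f_Ioc (hα : Even α) {a b : ℝ} : IntegrableOn (f α) (Ioc a b) := by
  exact ((f_continuous hα).integrableOn_Icc).mono_set Ioc_subset_Icc_self

lemma integrableOn_f_Ioi (hα : Even α) (h2 : 2 ≤ α) : IntegrableOn (f α) (Ioi 1) := by
  have ig : IntegrableOn (fun x : ℝ => x ^ (-2 : ℝ)) (Ioi 1) :=
    integrableOn_Ioi_rpow_of_lt (by norm_num) one_pos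
  apply Integrable.mono' ig ((f_continuous hα).aestronglyMeasurable.restrict)
  filter_upwards [ae_restrict_mem measurableSet_Ioi] with x hx
  have hx1 : (1:ℝ) ≤ x := le_of_lt hx
  have hx0 : (0:ℝ) < x := lt_of_lt_of_le one_pos hx1
  rw [Real.norm_of_nonneg (f_nonneg (by positivity))]
  calc f α x ≤ (x ^ 2)⁻¹ := f_ub_inv_sq h2 hx1
    _ = x ^ (-2:ℝ) := by
        rw [← Real.rpow_natCast x 2, ← Real.rpow_neg (le_of_lt hx0)]
        norm_num

lemma integrableOn_f_Ioi' (hα : Even α) (h2 : 2 ≤ α) (ht : 0 < t) (ht1 : t ≤ 1) :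
    IntegrableOn (f α) (Ioi t) := by
  have := (integrableOn_f_Ioc (hα := hα) (a := t) (b := 1)).union (integrableOn_f_Ioi hα h2)
  rwa [Ioc_union_Ioi_eq_Ioi ht1] at this

lemma integral_le_F (hα : Even α) (h2 : 2 ≤ α) (ht : 0 < t) (ht1 : t ≤ 1) :
    ∫ x in Ioi t, f α x ≤ t * F α t := by
  have hc := f_continuous hα
  have key : ∀ N : ℕ, (∫ x in t..(t * (N + 1)), f α x)
      ≤ t * ∑ n ∈ range N, f α (t * (n + 1)) := by
    intro N
    induction N with
    | zero => norm_num
    | succ N ih =>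
      have hadj : (∫ x in t..(t * (N + 1)), f α x) + (∫ x in (t * (N+1))..(t * (N + 2)), f α x)
          = ∫ x in t..(t * (N + 2)), f α x :=
        intervalIntegral.integral_add_adjacent_intervals
          (hc.intervalIntegrable _ _) (hc.intervalIntegrable _ _)
      have hN2 : t * ((N:ℝ)+1) ≤ t * ((N:ℝ)+2) := by nlinarith
      have hstep : (∫ x in (t * (N+1))..(t * (N + 2)), f α x) ≤ t * f α (t * (N + 1)) := by
        have hmono : (∫ x in (t * (N+1))..(t * (N + 2)), f α x)
            ≤ ∫ _x in (t * (N+1))..(t * (N + 2)), f α (t * (N+1)) := by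
          apply intervalIntegral.integral_mono_on hN2 (hc.intervalIntegrable _ _)
            (intervalIntegrable_const)
          intro x hx
          exact f_anti (by positivity) hx.1
        rw [intervalIntegral.integral_const] at hmono
        have : (t * ((N:ℝ) + 2) - t * ((N:ℝ)+1)) • f α (t * ((N:ℝ)+1)) = t * f α (t * ((N:ℝ)+1)) := by
          rw [smul_eq_mul]; ring_nf
        rw [this] at hmono
        exact hmono
      have harg : t * (((N:ℕ):ℝ) + 1 + 1) = t * (((N:ℕ):ℝ) + 2) := by ring
      rw [Finset.sum_range_succ]
      push_cast at ih ⊢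
      have hre : (∫ x in t..(t * ((N:ℝ) + 1 + 1)), f α x)
          = (∫ x in t..(t * ((N:ℝ) + 1)), f α x)
            + ∫ x in (t * ((N:ℝ)+1))..(t * ((N:ℝ) + 2)), f α x := by
        rw [show t * ((N:ℝ) + 1 + 1) = t * ((N:ℝ) + 2) by ring]
        exact hadj.symm
      rw [hre]
      have hsum := add_le_add ih hstep
      linarith [hsum]
  have htend : Filter.Tendsto (fun N : ℕ => t * ((N:ℝ) + 1)) Filter.atTop Filter.atTop := by
    apply Filter.Tendsto.const_mul_atTop ht
    exact Filter.tendsto_atTop_add_const_right _ 1 tendsto_natCast_atTop_atTop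
  have hlim := intervalIntegral_tendsto_integral_Ioi t (integrableOn_f_Ioi' hα h2 ht ht1) htend
  apply le_of_tendsto hlim
  filter_upwards with N
  calc (∫ x in t..(t * ((N:ℝ) + 1)), f α x) ≤ t * ∑ n ∈ range N, f α (t * (n + 1)) := key N
    _ ≤ t * F α t := mul_le_mul_of_nonneg_left (sum_le_F h2 ht N) (le_of_lt ht)


/-- energy lower bound via integrals -/
lemma energy_int_lb (hα : Even α) (h2 : 2 ≤ α) (ht : 0 < t) (ht1 : t ≤ 1) :
    t + 2 * ((∫ x in Ioc t 1, f α x) + ∫ x in Ioi (1:ℝ), f α x) ≤ latticeEnergy α t := by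
  rw [energy_eq hα h2 ht]
  have hsplit : (∫ x in Ioi t, f α x) = (∫ x in Ioc t 1, f α x) + ∫ x in Ioi (1:ℝ), f α x := by
    rw [← setIntegral_union (Ioc_disjoint_Ioi le_rfl) measurableSet_Ioi
      (integrableOn_f_Ioc hα) (integrableOn_f_Ioi hα h2), Ioc_union_Ioi_eq_Ioi ht1]
  rw [← hsplit]
  have := integral_le_F hα h2 ht ht1
  nlinarith [this]

/-- Ioc part, general α -/
lemma int_Ioc_lb (hα : Even α) (ht : 0 ≤ t) (ht1 : t ≤ 1) :
    1 - t - 1/((α:ℝ)+1) ≤ ∫ x in Ioc t 1, f α x := by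
  have hα1 : (0:ℝ) < (α:ℝ) + 1 := by positivity
  have hmono : (∫ x in Ioc t 1, (1 - x ^ α)) ≤ ∫ x in Ioc t 1, f α x := by
    apply setIntegral_mono_on
      ((continuous_const.sub (continuous_pow α)).integrableOn_Icc.mono_set Ioc_subset_Icc_self)
      (integrableOn_f_Ioc hα) measurableSet_Ioc
    intro x hx
    simp only [Pi.sub_apply]
    have hx0 : (0:ℝ) < x := lt_of_le_of_lt ht hx.1
    rw [f, le_div_iff₀ (denom_pos (le_of_lt hx0))]
    nlinarith [sq_nonneg (x ^ α)]
  have hval : (∫ x in Ioc t 1, (1 - x ^ α)) = (1 - t) - (1 - t^(α+1))/((α:ℝ)+1) := by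
    rw [← intervalIntegral.integral_of_le ht1]
    rw [intervalIntegral.integral_sub intervalIntegrable_const
      ((continuous_pow α).intervalIntegrable _ _)]
    rw [intervalIntegral.integral_const, integral_pow, smul_eq_mul]
    push_cast
    ring
  have htpow : 0 ≤ t^(α+1) := pow_nonneg ht _
  have h5 : (1 - t^(α+1))/((α:ℝ)+1) ≤ 1/((α:ℝ)+1) := by
    gcongr
    linarith
  linarith [hmono, hval.symm.le, hval.le]


/-- Ioc part, α = 6 sharper -/
lemma int_Ioc_lb6 (ht : 0 ≤ t) (ht1 : t ≤ 1) :
    1 - 1/7 + 1/13 - 1/19 - t ≤ ∫ x in Ioc t 1, f 6 x := by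
  have hev : Even 6 := by decide
  have hcont : Continuous (fun x : ℝ => 1 - x^6 + x^12 - x^18) := by continuity
  have hmono : (∫ x in Ioc t 1, (1 - x^6 + x^12 - x^18)) ≤ ∫ x in Ioc t 1, f 6 x := by
    apply setIntegral_mono_on
      (hcont.integrableOn_Icc.mono_set Ioc_subset_Icc_self)
      (integrableOn_f_Ioc hev) measurableSet_Ioc
    intro x hx
    have hx0 : (0:ℝ) < x := lt_of_le_of_lt ht hx.1
    rw [f, le_div_iff₀ (denom_pos (le_of_lt hx0))]
    nlinarith [pow_nonneg (le_of_lt hx0) 24, sq_nonneg (x^6), sq_nonneg (x^12)]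
  have hval : (∫ x in Ioc t 1, (1 - x^6 + x^12 - x^18))
      = ((1 - t) - (1 - t^7)/7) + ((1 - t^13)/13 - (1 - t^19)/19) := by
    rw [← intervalIntegral.integral_of_le ht1]
    have i1 : IntervalIntegrable (fun x:ℝ => 1 - x^6) volume t 1 :=
      (continuous_const.sub (continuous_pow 6)).intervalIntegrable _ _
    have i2 : IntervalIntegrable (fun x:ℝ => x^12) volume t 1 :=
      (continuous_pow 12).intervalIntegrable _ _
    have i3 : IntervalIntegrable (fun x:ℝ => x^18) volume t 1 :=
      (continuous_pow 18).intervalIntegrable _ _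
    have e : (fun x:ℝ => 1 - x^6 + x^12 - x^18) = fun x:ℝ => ((1 - x^6) + x^12) - x^18 := by
      funext x; ring
    rw [e, intervalIntegral.integral_sub (i1.add i2) i3, intervalIntegral.integral_add i1 i2,
      intervalIntegral.integral_sub intervalIntegrable_const ((continuous_pow 6).intervalIntegrable _ _),
      intervalIntegral.integral_const, integral_pow, integral_pow, integral_pow, smul_eq_mul]
    norm_num
    ring
  have h7 : t^13 ≤ t^7 := pow_le_pow_of_le_one ht ht1 (by norm_num)
  have h19 : 0 ≤ t^19 := pow_nonneg ht _
  have h13 : 0 ≤ t^13 := pow_nonneg ht _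
  have h7' : 0 ≤ t^7 := pow_nonneg ht _
  nlinarith [hmono, hval.le, hval.symm.le]


lemma rpow_eq_inv_pow {x : ℝ} (hx : 0 < x) (m : ℕ) : x ^ (-(m:ℝ)) = (x ^ m)⁻¹ := by
  rw [← Real.rpow_natCast x m, ← Real.rpow_neg (le_of_lt hx)]

/-- Ioi part, general α -/
lemma int_Ioi_lb (hα : Even α) (h2 : 2 ≤ α) :
    1/((α:ℝ)-1) - 1/(2*(α:ℝ)-1) ≤ ∫ x in Ioi (1:ℝ), f α x := by
  have hα2 : (2:ℝ) ≤ (α:ℝ) := by exact_mod_cast h2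
  have ha1 : -((α:ℝ)) < -1 := by linarith
  have ha2 : -(2*(α:ℝ)) < -1 := by linarith
  have ig1 : IntegrableOn (fun x : ℝ => x ^ (-(α:ℝ))) (Ioi 1) :=
    integrableOn_Ioi_rpow_of_lt ha1 one_pos
  have ig2 : IntegrableOn (fun x : ℝ => x ^ (-(2*(α:ℝ)))) (Ioi 1) :=
    integrableOn_Ioi_rpow_of_lt ha2 one_pos
  have hmono : (∫ x in Ioi (1:ℝ), (x ^ (-(α:ℝ)) - x ^ (-(2*(α:ℝ))))) ≤ ∫ x in Ioi (1:ℝ), f α x := by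
    apply setIntegral_mono_on (ig1.sub ig2) (integrableOn_f_Ioi hα h2) measurableSet_Ioi
    intro x hx
    simp only [Pi.sub_apply, Pi.add_apply]
    have hx1 : (1:ℝ) < x := hx
    have hx0 : (0:ℝ) < x := by linarith
    have hy : (1:ℝ) ≤ x ^ α := one_le_pow₀ (le_of_lt hx1)
    have e1 : x ^ (-(α:ℝ)) = (x ^ α)⁻¹ := rpow_eq_inv_pow hx0 α
    have e2 : x ^ (-(2*(α:ℝ))) = ((x ^ α) ^ 2)⁻¹ := by
      have : (2*(α:ℝ)) = ((α * 2 : ℕ) : ℝ) := by push_cast; ring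
      rw [this, rpow_eq_inv_pow hx0 (α * 2), pow_mul]
    rw [e1, e2, f]
    set y := x ^ α with hy'
    have hy0 : (0:ℝ) < y := by positivity
    rw [show y⁻¹ - (y^2)⁻¹ = (y - 1)/y^2 by field_simp,
      div_le_div_iff₀ (by positivity) (by positivity)]
    nlinarith
  have hv1 : (∫ x in Ioi (1:ℝ), x ^ (-(α:ℝ))) = 1/((α:ℝ)-1) := by
    rw [integral_Ioi_rpow_of_lt ha1 one_pos, Real.one_rpow,
      div_eq_div_iff (by intro h; norm_num at h; linarith) (by intro h; norm_num at h; linarith)]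
    ring
  have hv2 : (∫ x in Ioi (1:ℝ), x ^ (-(2*(α:ℝ)))) = 1/(2*(α:ℝ)-1) := by
    rw [integral_Ioi_rpow_of_lt ha2 one_pos, Real.one_rpow,
      div_eq_div_iff (by intro h; norm_num at h; linarith) (by intro h; norm_num at h; linarith)]
    ring
  have hsub : (∫ x in Ioi (1:ℝ), (x ^ (-(α:ℝ)) - x ^ (-(2*(α:ℝ)))))
      = (∫ x in Ioi (1:ℝ), x ^ (-(α:ℝ))) - ∫ x in Ioi (1:ℝ), x ^ (-(2*(α:ℝ))) :=
    integral_sub ig1 ig2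
  rw [hsub, hv1, hv2] at hmono
  exact hmono

/-- Ioi part, α = 6 sharper -/
lemma int_Ioi_lb6 : 1/5 - 1/11 + 1/17 - 1/23 ≤ ∫ x in Ioi (1:ℝ), f 6 x := by
  have hev : Even 6 := by decide
  have h6 : -(6:ℝ) < -1 := by norm_num
  have h12 : -(12:ℝ) < -1 := by norm_num
  have h18 : -(18:ℝ) < -1 := by norm_num
  have h24 : -(24:ℝ) < -1 := by norm_num
  have ig1 : IntegrableOn (fun x : ℝ => x ^ (-(6:ℝ))) (Ioi 1) := integrableOn_Ioi_rpow_of_lt h6 one_pos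
  have ig2 : IntegrableOn (fun x : ℝ => x ^ (-(12:ℝ))) (Ioi 1) := integrableOn_Ioi_rpow_of_lt h12 one_pos
  have ig3 : IntegrableOn (fun x : ℝ => x ^ (-(18:ℝ))) (Ioi 1) := integrableOn_Ioi_rpow_of_lt h18 one_pos
  have ig4 : IntegrableOn (fun x : ℝ => x ^ (-(24:ℝ))) (Ioi 1) := integrableOn_Ioi_rpow_of_lt h24 one_pos
  have hmono : (∫ x in Ioi (1:ℝ), (x ^ (-(6:ℝ)) - x ^ (-(12:ℝ)) + x ^ (-(18:ℝ)) - x ^ (-(24:ℝ))))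
      ≤ ∫ x in Ioi (1:ℝ), f 6 x := by
    apply setIntegral_mono_on (((ig1.sub ig2).add ig3).sub ig4)
      (integrableOn_f_Ioi hev (by norm_num)) measurableSet_Ioi
    intro x hx
    simp only [Pi.sub_apply, Pi.add_apply]
    have hx1 : (1:ℝ) < x := hx
    have hx0 : (0:ℝ) < x := by linarith
    have e1 : x ^ (-(6:ℝ)) = (x ^ 6)⁻¹ := by
      rw [show (-(6:ℝ)) = -((6:ℕ):ℝ) by norm_num, rpow_eq_inv_pow hx0 6]
    have e2 : x ^ (-(12:ℝ)) = ((x ^ 6)^2)⁻¹ := by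
      rw [show (-(12:ℝ)) = -((12:ℕ):ℝ) by norm_num, rpow_eq_inv_pow hx0 12]
      congr 1; ring
    have e3 : x ^ (-(18:ℝ)) = ((x ^ 6)^3)⁻¹ := by
      rw [show (-(18:ℝ)) = -((18:ℕ):ℝ) by norm_num, rpow_eq_inv_pow hx0 18]
      congr 1; ring
    have e4 : x ^ (-(24:ℝ)) = ((x ^ 6)^4)⁻¹ := by
      rw [show (-(24:ℝ)) = -((24:ℕ):ℝ) by norm_num, rpow_eq_inv_pow hx0 24]
      congr 1; ring
    rw [e1, e2, e3, e4, f]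
    set y := x ^ 6 with hy'
    have hy : (1:ℝ) ≤ y := one_le_pow₀ (le_of_lt hx1)
    have hy0 : (0:ℝ) < y := by positivity
    rw [show y⁻¹ - (y^2)⁻¹ + (y^3)⁻¹ - (y^4)⁻¹ = (y^3 - y^2 + y - 1)/y^4 by field_simp,
      div_le_div_iff₀ (by positivity) (by positivity)]
    nlinarith
  have hv1 : (∫ x in Ioi (1:ℝ), x ^ (-(6:ℝ))) = 1/5 := by
    rw [integral_Ioi_rpow_of_lt h6 one_pos, Real.one_rpow]; norm_num
  have hv2 : (∫ x in Ioi (1:ℝ), x ^ (-(12:ℝ))) = 1/11 := by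
    rw [integral_Ioi_rpow_of_lt h12 one_pos, Real.one_rpow]; norm_num
  have hv3 : (∫ x in Ioi (1:ℝ), x ^ (-(18:ℝ))) = 1/17 := by
    rw [integral_Ioi_rpow_of_lt h18 one_pos, Real.one_rpow]; norm_num
  have hv4 : (∫ x in Ioi (1:ℝ), x ^ (-(24:ℝ))) = 1/23 := by
    rw [integral_Ioi_rpow_of_lt h24 one_pos, Real.one_rpow]; norm_num
  have igA : IntegrableOn (fun x : ℝ => x ^ (-(6:ℝ)) - x ^ (-(12:ℝ))) (Ioi 1) := ig1.sub ig2
  have igB : IntegrableOn (fun x : ℝ => x ^ (-(6:ℝ)) - x ^ (-(12:ℝ)) + x ^ (-(18:ℝ))) (Ioi 1) :=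
    igA.add ig3
  have hsub : (∫ x in Ioi (1:ℝ), (x ^ (-(6:ℝ)) - x ^ (-(12:ℝ)) + x ^ (-(18:ℝ)) - x ^ (-(24:ℝ))))
      = (((∫ x in Ioi (1:ℝ), x ^ (-(6:ℝ))) - ∫ x in Ioi (1:ℝ), x ^ (-(12:ℝ)))
        + ∫ x in Ioi (1:ℝ), x ^ (-(18:ℝ))) - ∫ x in Ioi (1:ℝ), x ^ (-(24:ℝ)) := by
    rw [integral_sub igB ig4, integral_add igA ig3, integral_sub ig1 ig2]
  rw [hsub, hv1, hv2, hv3, hv4] at hmono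
  linarith


lemma F_tail_14 (h6 : 6 ≤ α) :
    ∑' n : ℕ, f α ((7/5) * ((n:ℝ) + 2)) ≤ (5/7:ℝ)^6 / 16 := by
  apply Real.tsum_le_of_sum_range_le (fun n => f_nonneg (by positivity))
  intro N
  have key : ∀ n : ℕ, f α ((7/5) * ((n:ℝ) + 2))
      ≤ (5/7:ℝ)^6 / 16 * (1/((n:ℝ)+1) - 1/((n:ℝ)+2)) := by
    intro n
    set m : ℝ := (n : ℝ) with hm
    have hm0 : 0 ≤ m := Nat.cast_nonneg n
    have hx1 : (1:ℝ) ≤ (7/5) * (m + 2) := by nlinarith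
    have h1 := f_ub_inv_six h6 hx1
    have h16 : (16:ℝ) * ((m+1) * (m+2)) ≤ (m+2)^6 := by
      nlinarith [pow_le_pow_left₀ (by norm_num : (0:ℝ) ≤ 2) (by linarith : (2:ℝ) ≤ m + 2) 4,
        sq_nonneg m, sq_nonneg (m+2)]
    have hfrac : 1/(m+1) - 1/(m+2) = 1/((m+1)*(m+2)) := by
      rw [div_sub_div _ _ (by positivity) (by positivity)]
      ring_nf
    calc f α ((7/5) * (m + 2)) ≤ (((7/5) * (m+2)) ^ 6)⁻¹ := h1
      _ = (5/7:ℝ)^6 * ((m+2)^6)⁻¹ := by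
          rw [show (((7/5:ℝ) * (m+2)) ^ 6) = (7/5:ℝ)^6 * (m+2)^6 by ring, mul_inv]
          congr 1
          rw [← inv_pow]
          norm_num
      _ ≤ (5/7:ℝ)^6 * ((16:ℝ) * ((m+1) * (m+2)))⁻¹ :=
          mul_le_mul_of_nonneg_left (inv_anti₀ (by positivity) h16) (by positivity)
      _ = (5/7:ℝ)^6/16 * (1/((m+1)*(m+2))) := by
          rw [mul_inv, one_div]
          ring
      _ = (5/7:ℝ)^6/16 * (1/(m+1) - 1/(m+2)) := by rw [hfrac]
  have tele : ∀ N : ℕ, ∑ n ∈ range N, (1/((n:ℝ)+1) - 1/((n:ℝ)+2)) = 1 - 1/((N:ℝ)+1) := by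
    intro N
    induction N with
    | zero => simp
    | succ N ih =>
      rw [Finset.sum_range_succ, ih]
      push_cast
      have h1 : ((N:ℝ)+1) ≠ 0 := by positivity
      have h2 : ((N:ℝ)+2) ≠ 0 := by positivity
      field_simp
      ring
  have hc : (0:ℝ) ≤ (5/7:ℝ)^6/16 := by positivity
  calc ∑ n ∈ range N, f α ((7/5) * ((n:ℝ) + 2))
      ≤ ∑ n ∈ range N, (5/7:ℝ)^6/16 * (1/((n:ℝ)+1) - 1/((n:ℝ)+2)) :=
        Finset.sum_le_sum (fun n _ => key n)
    _ = (5/7:ℝ)^6/16 * (1 - 1/((N:ℝ)+1)) := by rw [← Finset.mul_sum, tele N]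
    _ ≤ (5/7:ℝ)^6/16 := by
        apply mul_le_of_le_one_right hc
        have : (0:ℝ) ≤ 1/((N:ℝ)+1) := by positivity
        linarith

lemma energy_ub_14 (hα : Even α) (h6 : 6 ≤ α) :
    latticeEnergy α (7/5) ≤ 7/5 + (14/5) * (f α (7/5) + (5/7:ℝ)^6/16) := by
  have h2 : 2 ≤ α := by omega
  have h0 : (0:ℝ) < 7/5 := by norm_num
  rw [energy_eq hα h2 h0]
  have hF : F α (7/5) ≤ f α (7/5) + (5/7:ℝ)^6/16 := by
    have hsplit := Summable.tsum_eq_zero_add (summable_f (t := 7/5) h2 h0)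
    rw [show ((0:ℕ):ℝ) + 1 = 1 by norm_num, mul_one] at hsplit
    have he : (fun n : ℕ => f α ((7/5:ℝ) * ((((n:ℕ)+1:ℕ):ℝ) + 1)))
        = fun n : ℕ => f α ((7/5) * ((n:ℝ)+2)) := by
      funext n; push_cast; ring_nf
    rw [he] at hsplit
    rw [F, hsplit]
    have := F_tail_14 h6
    linarith
  nlinarith [hF]



end Stmt7

set_option maxHeartbeats 4000000

open Stmt7 Finset in
/-- If `α ≥ 6` is an even integer and `s_α > 0` minimizes `t ↦ Σ_{n∈ℤ} t·f_α(tn)` over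
`t > 0`, then `s_α > 1`. -/
theorem statement7 (α : ℕ) (hα : Even α) (hα6 : 6 ≤ α) (s : ℝ) (hs : 0 < s)
    (hmin : ∀ t : ℝ, 0 < t → latticeEnergy α s ≤ latticeEnergy α t) :
    1 < s := by
  by_contra hcon
  push_neg at hcon
  have h2 : 2 ≤ α := by omega
  have hs0 : (0:ℝ) ≤ s := le_of_lt hs
  -- contradiction helper from scaling comparison
  have scale : ∀ M : ℕ, 1 ≤ M →
      ((M:ℝ) * f α ((M:ℝ) * s) + ((M:ℝ) - 1) / 2 < ∑ j ∈ range M, f α (s * (j + 1))) → False := by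
    intro M hM hcond
    have hM0 : (0:ℝ) < (M:ℝ) := by exact_mod_cast hM
    have hlt := energy_scale_lt hα h2 hs hM hcond
    have hle := hmin ((M:ℝ) * s) (by positivity)
    linarith
  -- upper bound at t = 7/5 from minimality
  have hub : latticeEnergy α s ≤ 7/5 + (14/5) * (f α (7/5) + (5/7:ℝ)^6/16) :=
    (hmin (7/5) (by norm_num)).trans (energy_ub_14 hα hα6)
  have hf14 : f α (7/5) ≤ 1/(1+(7/5:ℝ)^6) := f_ub6 hα6 (by norm_num) le_rfl
  -- even α ≥ 6 is 6 or ≥ 8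
  have halt : α = 6 ∨ 8 ≤ α := by
    rcases hα with ⟨k, hk⟩
    omega
  -- lower bound on E s via first term
  have hE1 : s + 2 * s * f α s ≤ latticeEnergy α s := by
    rw [energy_eq hα h2 hs]
    have h1 := sum_le_F (α := α) h2 hs 1
    rw [Finset.sum_range_one] at h1
    norm_num at h1
    nlinarith [h1]
  -- case tree on s
  rcases lt_or_ge (7/10 : ℝ) s with hr | hr
  · -- (7/10, 1] : direct comparison with 7/5
    rcases le_or_gt s (4/5) with hr2 | hr2
    · have hA : 1/(1+(4/5:ℝ)^6) ≤ f α s := f_lb6 hα6 hs0 hr2 (by norm_num)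
      have : (7/10:ℝ) + 2*(7/10)*(1/(1+(4/5:ℝ)^6)) ≤ s + 2*s*(f α s) := by nlinarith
      have hnum : (7/5:ℝ) + (14/5) * (1/(1+(7/5:ℝ)^6) + (5/7:ℝ)^6/16)
          < (7/10:ℝ) + 2*(7/10)*(1/(1+(4/5:ℝ)^6)) := by norm_num
      nlinarith [hub, hE1, hf14]
    rcases le_or_gt s (9/10) with hr3 | hr3
    · have hA : 1/(1+(9/10:ℝ)^6) ≤ f α s := f_lb6 hα6 hs0 hr3 (by norm_num)
      have : (4/5:ℝ) + 2*(4/5)*(1/(1+(9/10:ℝ)^6)) ≤ s + 2*s*(f α s) := by nlinarith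
      have hnum : (7/5:ℝ) + (14/5) * (1/(1+(7/5:ℝ)^6) + (5/7:ℝ)^6/16)
          < (4/5:ℝ) + 2*(4/5)*(1/(1+(9/10:ℝ)^6)) := by norm_num
      nlinarith [hub, hE1, hf14]
    · have hA : 1/(1+(1:ℝ)^6) ≤ f α s := f_lb6 hα6 hs0 hcon (by norm_num)
      have : (9/10:ℝ) + 2*(9/10)*(1/(1+(1:ℝ)^6)) ≤ s + 2*s*(f α s) := by nlinarith
      have hnum : (7/5:ℝ) + (14/5) * (1/(1+(7/5:ℝ)^6) + (5/7:ℝ)^6/16)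
          < (9/10:ℝ) + 2*(9/10)*(1/(1+(1:ℝ)^6)) := by norm_num
      nlinarith [hub, hE1, hf14]
  rcases lt_or_ge (11/20 : ℝ) s with hr1 | hr1
  · -- R1 : (11/20, 7/10], M = 2
    apply scale 2 (by norm_num)
    rw [Finset.sum_range_succ, Finset.sum_range_one]
    push_cast
    norm_num
    ring_nf
    have hA : 1/(1+(7/10:ℝ)^6) ≤ f α s := f_lb6 hα6 hs0 hr (by norm_num)
    have hB : f α (s*2) ≤ 1/(1+(11/10:ℝ)^6) := by
      apply f_ub6 hα6 (by norm_num)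
      linarith
    have hnum : (1/(1+(11/10:ℝ)^6)) + 1/2 < 1/(1+(7/10:ℝ)^6) := by norm_num
    nlinarith [hA, hB]
  have halt3 : α = 6 ∨ α = 8 ∨ 10 ≤ α := by
    rcases hα with ⟨k, hk⟩
    omega
  rcases lt_or_ge (1/2 : ℝ) s with hr2 | hr2
  · -- R2 : (1/2, 11/20], M = 3
    apply scale 3 (by norm_num)
    rw [Finset.sum_range_succ, Finset.sum_range_succ, Finset.sum_range_one]
    push_cast
    norm_num
    ring_nf
    have hA : 1 - (11/20:ℝ)^α ≤ f α s := f_lb_poly hs0 hr1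
    have hB : 1/(1+(11/10:ℝ)^α) ≤ f α (s*2) := f_lb_pt (by positivity) (by linarith)
    have hC : f α (s*3) ≤ 1/(1+(3/2:ℝ)^α) := f_ub_pt (by norm_num) (by linarith)
    have q1 : (11/20:ℝ)^α ≤ (2/3:ℝ)^α := pow_le_pow_left₀ (by norm_num) (by norm_num) α
    have q2 : 1/(1+(3/2:ℝ)^α) ≤ (2/3:ℝ)^α := by
      rw [div_le_iff₀ (by positivity)]
      have he : (2/3:ℝ)^α * (3/2:ℝ)^α = 1 := by rw [← mul_pow]; norm_num
      nlinarith [pow_nonneg (show (0:ℝ) ≤ 2/3 by norm_num) α]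
    have q3 : (11/15:ℝ)^α ≤ (11/15:ℝ)^6 := pow_le_pow_of_le_one (by norm_num) (by norm_num) hα6
    have q4 : (2/3:ℝ)^α * (11/10:ℝ)^α = (11/15:ℝ)^α := by rw [← mul_pow]; norm_num
    have q6 : 6 * ((2/3:ℝ)^α * (11/10:ℝ)^α) < 1 := by
      rw [q4]
      nlinarith [q3, show (11/15:ℝ)^6 < 1/6 by norm_num]
    have hB1 : (0:ℝ) < (11/10:ℝ)^α := by positivity
    have hB2 : (1:ℝ) ≤ (11/10:ℝ)^α := one_le_pow₀ (by norm_num)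
    have q5 : 1/(2*(11/10:ℝ)^α) ≤ 1/(1+(11/10:ℝ)^α) := by
      apply one_div_le_one_div_of_le (by positivity)
      linarith
    have q7 : 3 * (2/3:ℝ)^α < 1/(2*(11/10:ℝ)^α) := by
      rw [lt_div_iff₀ (by positivity)]
      nlinarith [q6]
    have hA0 : (0:ℝ) ≤ (2/3:ℝ)^α := by positivity
    nlinarith [hA, hB, hC, q1, q2, q5, q7]
  rcases lt_or_ge (9/20 : ℝ) s with hr3 | hr3
  · -- R3 : (9/20, 1/2], M = 3
    apply scale 3 (by norm_num)
    rw [Finset.sum_range_succ, Finset.sum_range_succ, Finset.sum_range_one]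
    push_cast
    norm_num
    ring_nf
    have hA : 1/(1+(1/2:ℝ)^6) ≤ f α s := f_lb6 hα6 hs0 hr2 (by norm_num)
    have hB : 1/(1+(1:ℝ)^α) ≤ f α (s*2) := f_lb_pt (by positivity) (by linarith)
    have hB' : (1/2:ℝ) ≤ f α (s*2) := by
      rw [one_pow] at hB
      norm_num at hB
      linarith
    have hC : f α (s*3) ≤ 1/(1+(27/20:ℝ)^6) := f_ub6 hα6 (by norm_num) (by linarith)
    have hnum : 2*(1/(1+(27/20:ℝ)^6)) + 1 < 1/(1+(1/2:ℝ)^6) + 1/2 := by norm_num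
    nlinarith [hA, hB', hC]
  rcases lt_or_ge (2/5 : ℝ) s with hr4 | hr4
  · -- R4 : (2/5, 9/20], M = 3
    apply scale 3 (by norm_num)
    rw [Finset.sum_range_succ, Finset.sum_range_succ, Finset.sum_range_one]
    push_cast
    norm_num
    ring_nf
    have hA : 1/(1+(9/20:ℝ)^6) ≤ f α s := f_lb6 hα6 hs0 hr3 (by norm_num)
    have hB : 1/(1+(9/10:ℝ)^6) ≤ f α (s*2) := f_lb6 hα6 (by positivity) (by linarith) (by norm_num)
    have hC : f α (s*3) ≤ 1/(1+(6/5:ℝ)^6) := f_ub6 hα6 (by norm_num) (by linarith)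
    have hnum : 2*(1/(1+(6/5:ℝ)^6)) + 1 < 1/(1+(9/20:ℝ)^6) + 1/(1+(9/10:ℝ)^6) := by norm_num
    nlinarith [hA, hB, hC]
  rcases lt_or_ge (3/8 : ℝ) s with hr5 | hr5
  · -- R5 : (3/8, 2/5], M = 3
    apply scale 3 (by norm_num)
    rw [Finset.sum_range_succ, Finset.sum_range_succ, Finset.sum_range_one]
    push_cast
    norm_num
    ring_nf
    have hA : 1/(1+(2/5:ℝ)^6) ≤ f α s := f_lb6 hα6 hs0 hr4 (by norm_num)
    have hB : 1/(1+(4/5:ℝ)^6) ≤ f α (s*2) := f_lb6 hα6 (by positivity) (by linarith) (by norm_num)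
    have hC : f α (s*3) ≤ 1/(1+(9/8:ℝ)^6) := f_ub6 hα6 (by norm_num) (by linarith)
    have hnum : 2*(1/(1+(9/8:ℝ)^6)) + 1 < 1/(1+(2/5:ℝ)^6) + 1/(1+(4/5:ℝ)^6) := by norm_num
    nlinarith [hA, hB, hC]
  rcases lt_or_ge (1/3 : ℝ) s with hr6 | hr6
  · -- R6 : (1/3, 3/8], M = 4
    apply scale 4 (by norm_num)
    rw [Finset.sum_range_succ, Finset.sum_range_succ, Finset.sum_range_succ, Finset.sum_range_one]
    push_cast
    norm_num
    ring_nf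
    have hA : 1/(1+(3/8:ℝ)^6) ≤ f α s := f_lb6 hα6 hs0 hr5 (by norm_num)
    have hB : 1/(1+(3/4:ℝ)^6) ≤ f α (s*2) := f_lb6 hα6 (by positivity) (by linarith) (by norm_num)
    have hC : (0:ℝ) ≤ f α (s*3) := f_nonneg (by positivity)
    have hC6 : 1/(1+(9/8:ℝ)^α) ≤ f α (s*3) := f_lb_pt (by positivity) (by linarith)
    have hD : f α (s*4) ≤ 1/(1+(4/3:ℝ)^α) := f_ub_pt (by norm_num) (by linarith)
    rcases halt with h6 | h8
    · subst h6
      have hnum : 3*(1/(1+(4/3:ℝ)^6)) + 3/2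
          < 1/(1+(3/8:ℝ)^6) + 1/(1+(3/4:ℝ)^6) + 1/(1+(9/8:ℝ)^6) := by norm_num
      nlinarith [hA, hB, hC6, hD]
    · have hD' : 1/(1+(4/3:ℝ)^α) ≤ (3/4:ℝ)^α := by
        rw [div_le_iff₀ (by positivity)]
        have he : (3/4:ℝ)^α * (4/3:ℝ)^α = 1 := by rw [← mul_pow]; norm_num
        nlinarith [pow_nonneg (show (0:ℝ) ≤ 3/4 by norm_num) α]
      have hD8 : (3/4:ℝ)^α ≤ (3/4:ℝ)^8 := pow_le_pow_of_le_one (by norm_num) (by norm_num) h8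
      have hnum : 3*((3/4:ℝ)^8) + 3/2 < 1/(1+(3/8:ℝ)^6) + 1/(1+(3/4:ℝ)^6) := by norm_num
      nlinarith [hA, hB, hC, hD, hD', hD8]
  rcases lt_or_ge (3/10 : ℝ) s with hr7 | hr7
  · -- R7 : (3/10, 1/3], M = 4
    apply scale 4 (by norm_num)
    rw [Finset.sum_range_succ, Finset.sum_range_succ, Finset.sum_range_succ, Finset.sum_range_one]
    push_cast
    norm_num
    ring_nf
    have hA : 1/(1+(1/3:ℝ)^6) ≤ f α s := f_lb6 hα6 hs0 hr6 (by norm_num)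
    have hB : 1/(1+(2/3:ℝ)^6) ≤ f α (s*2) := f_lb6 hα6 (by positivity) (by linarith) (by norm_num)
    have hC : 1/(1+(1:ℝ)^α) ≤ f α (s*3) := f_lb_pt (by positivity) (by linarith)
    have hC' : (1/2:ℝ) ≤ f α (s*3) := by
      rw [one_pow] at hC
      norm_num at hC
      linarith
    have hD : f α (s*4) ≤ 1/(1+(6/5:ℝ)^6) := f_ub6 hα6 (by norm_num) (by linarith)
    have hnum : 3*(1/(1+(6/5:ℝ)^6)) + 3/2 < 1/(1+(1/3:ℝ)^6) + 1/(1+(2/3:ℝ)^6) + 1/2 := by norm_num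
    nlinarith [hA, hB, hC', hD]
  rcases lt_or_ge (11/40 : ℝ) s with hr8 | hr8
  · -- R8 : (11/40, 3/10], M = 4
    apply scale 4 (by norm_num)
    rw [Finset.sum_range_succ, Finset.sum_range_succ, Finset.sum_range_succ, Finset.sum_range_one]
    push_cast
    norm_num
    ring_nf
    have hA : 1/(1+(3/10:ℝ)^6) ≤ f α s := f_lb6 hα6 hs0 hr7 (by norm_num)
    have hB : 1/(1+(3/5:ℝ)^6) ≤ f α (s*2) := f_lb6 hα6 (by positivity) (by linarith) (by norm_num)
    have hC : 1/(1+(9/10:ℝ)^6) ≤ f α (s*3) := f_lb6 hα6 (by positivity) (by linarith) (by norm_num)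
    have hD : f α (s*4) ≤ 1/(1+(11/10:ℝ)^6) := f_ub6 hα6 (by norm_num) (by linarith)
    have hnum : 3*(1/(1+(11/10:ℝ)^6)) + 3/2
        < 1/(1+(3/10:ℝ)^6) + 1/(1+(3/5:ℝ)^6) + 1/(1+(9/10:ℝ)^6) := by norm_num
    nlinarith [hA, hB, hC, hD]
  rcases lt_or_ge (1/4 : ℝ) s with hr9 | hr9
  · -- R9 : (1/4, 11/40], M = 5
    apply scale 5 (by norm_num)
    rw [Finset.sum_range_succ, Finset.sum_range_succ, Finset.sum_range_succ,
      Finset.sum_range_succ, Finset.sum_range_one]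
    push_cast
    norm_num
    ring_nf
    have hA : 1/(1+(11/40:ℝ)^6) ≤ f α s := f_lb6 hα6 hs0 hr8 (by norm_num)
    have hB : 1/(1+(11/20:ℝ)^6) ≤ f α (s*2) := f_lb6 hα6 (by positivity) (by linarith) (by norm_num)
    have hC : 1/(1+(33/40:ℝ)^6) ≤ f α (s*3) := f_lb6 hα6 (by positivity) (by linarith) (by norm_num)
    have hD0 : (0:ℝ) ≤ f α (s*4) := f_nonneg (by positivity)
    have hD : 1/(1+(11/10:ℝ)^α) ≤ f α (s*4) := f_lb_pt (by positivity) (by linarith)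
    have hE : f α (s*5) ≤ 1/(1+(5/4:ℝ)^α) := f_ub_pt (by norm_num) (by linarith)
    rcases halt3 with h6 | h8 | h10
    · subst h6
      have hnum : 4*(1/(1+(5/4:ℝ)^6)) + 2 < 1/(1+(11/40:ℝ)^6) + 1/(1+(11/20:ℝ)^6)
          + 1/(1+(33/40:ℝ)^6) + 1/(1+(11/10:ℝ)^6) := by norm_num
      nlinarith [hA, hB, hC, hD, hE]
    · subst h8
      have hnum : 4*(1/(1+(5/4:ℝ)^8)) + 2 < 1/(1+(11/40:ℝ)^6) + 1/(1+(11/20:ℝ)^6)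
          + 1/(1+(33/40:ℝ)^6) + 1/(1+(11/10:ℝ)^8) := by norm_num
      nlinarith [hA, hB, hC, hD, hE]
    · have hE' : 1/(1+(5/4:ℝ)^α) ≤ 1/(1+(5/4:ℝ)^10) := by
        apply one_div_le_one_div_of_le (by positivity)
        have := pow_le_pow_right₀ (show (1:ℝ) ≤ 5/4 by norm_num) h10
        linarith
      have hnum : 4*(1/(1+(5/4:ℝ)^10)) + 2 < 1/(1+(11/40:ℝ)^6) + 1/(1+(11/20:ℝ)^6)
          + 1/(1+(33/40:ℝ)^6) := by norm_num
      nlinarith [hA, hB, hC, hD0, hE, hE']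
  rcases lt_or_ge (11/50 : ℝ) s with hr10 | hr10
  · -- R10 : (11/50, 1/4], M = 6
    apply scale 6 (by norm_num)
    rw [Finset.sum_range_succ, Finset.sum_range_succ, Finset.sum_range_succ,
      Finset.sum_range_succ, Finset.sum_range_succ, Finset.sum_range_one]
    push_cast
    norm_num
    ring_nf
    have hA : 1/(1+(1/4:ℝ)^6) ≤ f α s := f_lb6 hα6 hs0 hr9 (by norm_num)
    have hB : 1/(1+(1/2:ℝ)^6) ≤ f α (s*2) := f_lb6 hα6 (by positivity) (by linarith) (by norm_num)
    have hC : 1/(1+(3/4:ℝ)^6) ≤ f α (s*3) := f_lb6 hα6 (by positivity) (by linarith) (by norm_num)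
    have hD : 1/(1+(1:ℝ)^α) ≤ f α (s*4) := f_lb_pt (by positivity) (by linarith)
    have hD' : (1/2:ℝ) ≤ f α (s*4) := by
      rw [one_pow] at hD
      norm_num at hD
      linarith
    have hE : (0:ℝ) ≤ f α (s*5) := f_nonneg (by positivity)
    have hF : f α (s*6) ≤ 1/(1+(33/25:ℝ)^6) := f_ub6 hα6 (by norm_num) (by linarith)
    have hnum : 5*(1/(1+(33/25:ℝ)^6)) + 5/2
        < 1/(1+(1/4:ℝ)^6) + 1/(1+(1/2:ℝ)^6) + 1/(1+(3/4:ℝ)^6) + 1/2 := by norm_num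
    nlinarith [hA, hB, hC, hD', hE, hF]
  rcases lt_or_ge (1/5 : ℝ) s with hr11 | hr11
  · -- R11 : (1/5, 11/50], M = 6
    apply scale 6 (by norm_num)
    rw [Finset.sum_range_succ, Finset.sum_range_succ, Finset.sum_range_succ,
      Finset.sum_range_succ, Finset.sum_range_succ, Finset.sum_range_one]
    push_cast
    norm_num
    ring_nf
    have hA : 1/(1+(11/50:ℝ)^6) ≤ f α s := f_lb6 hα6 hs0 hr10 (by norm_num)
    have hB : 1/(1+(11/25:ℝ)^6) ≤ f α (s*2) := f_lb6 hα6 (by positivity) (by linarith) (by norm_num)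
    have hC : 1/(1+(33/50:ℝ)^6) ≤ f α (s*3) := f_lb6 hα6 (by positivity) (by linarith) (by norm_num)
    have hD : 1/(1+(22/25:ℝ)^6) ≤ f α (s*4) := f_lb6 hα6 (by positivity) (by linarith) (by norm_num)
    have hE0 : (0:ℝ) ≤ f α (s*5) := f_nonneg (by positivity)
    have hE : 1/(1+(11/10:ℝ)^α) ≤ f α (s*5) := f_lb_pt (by positivity) (by linarith)
    have hF : f α (s*6) ≤ 1/(1+(6/5:ℝ)^α) := f_ub_pt (by norm_num) (by linarith)
    rcases halt with h6 | h8
    · subst h6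
      have hnum : 5*(1/(1+(6/5:ℝ)^6)) + 5/2 < 1/(1+(11/50:ℝ)^6) + 1/(1+(11/25:ℝ)^6)
          + 1/(1+(33/50:ℝ)^6) + 1/(1+(22/25:ℝ)^6) + 1/(1+(11/10:ℝ)^6) := by norm_num
      nlinarith [hA, hB, hC, hD, hE, hF]
    · have hF' : 1/(1+(6/5:ℝ)^α) ≤ 1/(1+(6/5:ℝ)^8) := by
        apply one_div_le_one_div_of_le (by positivity)
        have := pow_le_pow_right₀ (show (1:ℝ) ≤ 6/5 by norm_num) h8
        linarith
      have hnum : 5*(1/(1+(6/5:ℝ)^8)) + 5/2 < 1/(1+(11/50:ℝ)^6) + 1/(1+(11/25:ℝ)^6)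
          + 1/(1+(33/50:ℝ)^6) + 1/(1+(22/25:ℝ)^6) := by norm_num
      nlinarith [hA, hB, hC, hD, hE0, hF, hF']
  · -- R12 : (0, 1/5], integral bound
    rcases halt with h6 | h8
    · subst h6
      have hlow := energy_int_lb hα h2 hs hcon
      have hioc := int_Ioc_lb6 hs0 hcon
      have hioi := int_Ioi_lb6
      have hnum : (7/5:ℝ) + (14/5) * (1/(1+(7/5:ℝ)^6) + (5/7:ℝ)^6/16)
          < 1/5 + 2*((1 - 1/7 + 1/13 - 1/19 - 1/5) + (1/5 - 1/11 + 1/17 - 1/23)) := by norm_num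
      nlinarith [hub, hf14, hlow, hioc, hioi]
    · have hα8 : (8:ℝ) ≤ (α:ℝ) := by exact_mod_cast h8
      have hlow := energy_int_lb hα h2 hs hcon
      have hioc := int_Ioc_lb hα hs0 hcon
      have hioi := int_Ioi_lb hα h2
      have hq1 : 1/((α:ℝ)+1) ≤ 1/((α:ℝ)-1) :=
        one_div_le_one_div_of_le (by linarith) (by linarith)
      have hq2 : 1/(2*(α:ℝ)-1) ≤ 1/15 :=
        one_div_le_one_div_of_le (by norm_num) (by linarith)
      have hf14' : f α (7/5) ≤ 1/(1+(7/5:ℝ)^8) := by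
        have h1 : f α (7/5) ≤ 1/(1+(7/5:ℝ)^α) := f_ub_pt (by norm_num) le_rfl
        have h2' : 1/(1+(7/5:ℝ)^α) ≤ 1/(1+(7/5:ℝ)^8) := by
          apply one_div_le_one_div_of_le (by positivity)
          have := pow_le_pow_right₀ (show (1:ℝ) ≤ 7/5 by norm_num) h8
          linarith
        linarith
      have hnum : (7/5:ℝ) + (14/5) * (1/(1+(7/5:ℝ)^8) + (5/7:ℝ)^6/16) < 5/3 := by norm_num
      nlinarith [hub, hf14', hlow, hioc, hioi, hq1, hq2, hcon, hr11]
end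

section
/- Let α ≥ 16 be an even integer. Then for every s with 0 < s ≤ 1, Σ_{n∈ℤ} s·f_α(s n) ≥ (2/3)·(1 + 1/(1 + 2^{−α})). -/
private lemma denomPos (α : ℕ) (hα : Even α) (x : ℝ) : 0 < 1 + x ^ α := by
  have h := hα.pow_nonneg x
  linarith

private lemma termNonneg (α : ℕ) (hα : Even α) (s : ℝ) (hs0 : 0 ≤ s) (n : ℤ) :
    0 ≤ s * (1 / (1 + (s * (n : ℝ)) ^ α)) :=
  mul_nonneg hs0 (one_div_nonneg.mpr (denomPos α hα _).le)

private lemma summableTerm (α : ℕ) (hα : Even α) (hα16 : 16 ≤ α) (s : ℝ) (hs0 : 0 < s) :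
    Summable (fun n : ℤ => s * (1 / (1 + (s * (n : ℝ)) ^ α))) := by
  have hp : Summable (fun n : ℤ => 1 / (n : ℝ) ^ α) :=
    Real.summable_one_div_int_pow.mpr (by omega)
  apply Summable.of_norm_bounded_eventually (g := fun n : ℤ => (s / s ^ α) * (1 / (n : ℝ) ^ α))
    (hp.mul_left _)
  filter_upwards [Filter.eventually_cofinite_ne (0 : ℤ)] with n hn
  have habs : (1 : ℝ) ≤ |(n : ℝ)| := by
    rw [← Int.cast_abs]
    exact_mod_cast Int.one_le_abs hn
  have hnpow : (0 : ℝ) < (n : ℝ) ^ α := by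
    rw [← hα.pow_abs]
    positivity
  have hspow : (0 : ℝ) < s ^ α := by positivity
  have hd := denomPos α hα (s * (n : ℝ))
  rw [Real.norm_eq_abs, abs_of_nonneg (termNonneg α hα s hs0.le n)]
  rw [mul_one_div, mul_one_div, div_div, div_le_div_iff₀ hd (by positivity)]
  have hmp : (s * (n : ℝ)) ^ α = s ^ α * (n : ℝ) ^ α := mul_pow ..
  nlinarith [mul_pos hspow hnpow, hs0.le, mul_nonneg hs0.le (mul_pos hspow hnpow).le]

private lemma termGe (α : ℕ) (hα : Even α) (hα16 : 16 ≤ α) (s : ℝ) (hs0 : 0 < s)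
    (n : ℤ) (c : ℝ) (hc0 : 0 ≤ c) (hc1 : c ≤ 1) (h : |s * (n : ℝ)| ≤ c) :
    s * (1 / (1 + c ^ 16)) ≤ s * (1 / (1 + (s * (n : ℝ)) ^ α)) := by
  have h1 : (s * (n : ℝ)) ^ α ≤ c ^ 16 :=
    calc (s * (n : ℝ)) ^ α = |s * (n : ℝ)| ^ α := (hα.pow_abs _).symm
      _ ≤ c ^ α := pow_le_pow_left₀ (abs_nonneg _) h α
      _ ≤ c ^ 16 := pow_le_pow_of_le_one hc0 hc1 hα16
  have h2 := denomPos α hα (s * (n : ℝ))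
  exact mul_le_mul_of_nonneg_left (one_div_le_one_div_of_le h2 (by linarith)) hs0.le

private lemma term0 (α : ℕ) (hα16 : 16 ≤ α) (s : ℝ) :
    s * (1 / (1 + (s * ((0 : ℤ) : ℝ)) ^ α)) = s := by
  norm_num [zero_pow (by omega : α ≠ 0)]

private lemma key3 (α : ℕ) (hα : Even α) (hα16 : 16 ≤ α) (s : ℝ) (hs0 : 0 < s)
    (c : ℝ) (hc0 : 0 ≤ c) (hc1 : c ≤ 1) (hsc : s ≤ c) :
    s + 2 * (s * (1 / (1 + c ^ 16))) ≤ latticeEnergy α s := by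
  have habs : |s * ((-1 : ℤ) : ℝ)| ≤ c := by
    push_cast
    rw [mul_neg_one, abs_neg, abs_of_pos hs0]; exact hsc
  have habs1 : |s * ((1 : ℤ) : ℝ)| ≤ c := by
    push_cast
    rw [mul_one, abs_of_pos hs0]; exact hsc
  have t1 := termGe α hα hα16 s hs0 (-1) c hc0 hc1 habs
  have t2 := termGe α hα hα16 s hs0 1 c hc0 hc1 habs1
  have hsum := Summable.sum_le_tsum ({-1, 0, 1} : Finset ℤ)
      (fun i _ => termNonneg α hα s hs0.le i) (summableTerm α hα hα16 s hs0)
  rw [show ({-1,0,1} : Finset ℤ) = insert (-1) (insert 0 {1}) from rfl,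
      Finset.sum_insert (by norm_num), Finset.sum_insert (by norm_num),
      Finset.sum_singleton] at hsum
  simp only [term0 α hα16 s] at hsum
  unfold latticeEnergy
  linarith

private lemma key5 (α : ℕ) (hα : Even α) (hα16 : 16 ≤ α) (s : ℝ) (hs0 : 0 < s)
    (c1 c2 : ℝ) (hc10 : 0 ≤ c1) (hc11 : c1 ≤ 1) (hc20 : 0 ≤ c2) (hc21 : c2 ≤ 1)
    (hsc1 : s ≤ c1) (hsc2 : 2 * s ≤ c2) :
    s + 2 * (s * (1 / (1 + c1 ^ 16))) + 2 * (s * (1 / (1 + c2 ^ 16))) ≤ latticeEnergy α s := by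
  have habs1 : |s * ((-1 : ℤ) : ℝ)| ≤ c1 := by
    push_cast; rw [mul_neg_one, abs_neg, abs_of_pos hs0]; exact hsc1
  have habs1' : |s * ((1 : ℤ) : ℝ)| ≤ c1 := by
    push_cast; rw [mul_one, abs_of_pos hs0]; exact hsc1
  have habs2 : |s * ((-2 : ℤ) : ℝ)| ≤ c2 := by
    push_cast; rw [show s * (-2 : ℝ) = -(2 * s) by ring, abs_neg,
      abs_of_pos (by linarith)]; exact hsc2
  have habs2' : |s * ((2 : ℤ) : ℝ)| ≤ c2 := by
    push_cast; rw [show s * (2 : ℝ) = 2 * s by ring, abs_of_pos (by linarith)]; exact hsc2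
  have t1 := termGe α hα hα16 s hs0 (-1) c1 hc10 hc11 habs1
  have t2 := termGe α hα hα16 s hs0 1 c1 hc10 hc11 habs1'
  have t3 := termGe α hα hα16 s hs0 (-2) c2 hc20 hc21 habs2
  have t4 := termGe α hα hα16 s hs0 2 c2 hc20 hc21 habs2'
  have hsum := Summable.sum_le_tsum ({-2, -1, 0, 1, 2} : Finset ℤ)
      (fun i _ => termNonneg α hα s hs0.le i) (summableTerm α hα hα16 s hs0)
  rw [show ({-2,-1,0,1,2} : Finset ℤ) = insert (-2) (insert (-1) (insert 0 (insert 1 {2})))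
        from rfl,
      Finset.sum_insert (by norm_num), Finset.sum_insert (by norm_num),
      Finset.sum_insert (by norm_num), Finset.sum_insert (by norm_num),
      Finset.sum_singleton] at hsum
  simp only [term0 α hα16 s] at hsum
  unfold latticeEnergy
  linarith

private lemma keyC (α : ℕ) (hα : Even α) (hα16 : 16 ≤ α) (s : ℝ) (hs0 : 0 < s)
    (hs27 : s ≤ 27 / 100) : (4 : ℝ) / 3 ≤ latticeEnergy α s := by
  set N : ℕ := ⌊(17 / 20) / s⌋₊ with hN
  have hNle : (N : ℝ) * s ≤ 17 / 20 := by
    have h := Nat.floor_le (show (0 : ℝ) ≤ (17 / 20) / s by positivity)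
    rw [← hN] at h
    calc (N : ℝ) * s ≤ ((17 / 20) / s) * s := by nlinarith
      _ = 17 / 20 := by field_simp
  have hNge : 17 / 20 - s ≤ (N : ℝ) * s := by
    have h := Nat.sub_one_lt_floor ((17 / 20) / s)
    rw [← hN] at h
    have h2 : ((17 / 20) / s - 1) * s < (N : ℝ) * s := by nlinarith
    have h3 : ((17 / 20) / s - 1) * s = 17 / 20 - s := by field_simp
    linarith
  set F : Finset ℤ := Finset.Icc (-(N : ℤ)) N with hF
  have h0F : (0 : ℤ) ∈ F := by simp [hF]
  have hcard : (F.erase 0).card = 2 * N := by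
    rw [Finset.card_erase_of_mem h0F, hF, Int.card_Icc]
    omega
  have hbound : ∀ i ∈ F.erase 0,
      s * (1 / (1 + (17 / 20 : ℝ) ^ 16)) ≤ s * (1 / (1 + (s * (i : ℝ)) ^ α)) := by
    intro i hi
    have hiF := Finset.mem_of_mem_erase hi
    rw [hF, Finset.mem_Icc] at hiF
    apply termGe α hα hα16 s hs0 i _ (by norm_num) (by norm_num)
    rw [abs_mul, abs_of_pos hs0]
    have hia : |(i : ℝ)| ≤ (N : ℝ) := by
      rw [← Int.cast_abs]
      exact_mod_cast abs_le.mpr hiF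
    nlinarith [abs_nonneg (i : ℝ)]
  have hlow := Finset.card_nsmul_le_sum (F.erase 0)
      (fun n : ℤ => s * (1 / (1 + (s * (n : ℝ)) ^ α)))
      (s * (1 / (1 + (17 / 20 : ℝ) ^ 16))) hbound
  rw [hcard, nsmul_eq_mul] at hlow
  have hsplit := Finset.add_sum_erase F (fun n : ℤ => s * (1 / (1 + (s * (n : ℝ)) ^ α))) h0F
  simp only [term0 α hα16 s] at hsplit
  have hsum := Summable.sum_le_tsum F (fun i _ => termNonneg α hα s hs0.le i)
      (summableTerm α hα hα16 s hs0)
  have hr : (0.9305 : ℝ) ≤ 1 / (1 + (17 / 20 : ℝ) ^ 16) := by norm_num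
  have e1 : 2 * (17 / 20 - s) * (0.9305 : ℝ) ≤
      ((2 * N : ℕ) : ℝ) * (s * (1 / (1 + (17 / 20 : ℝ) ^ 16))) := by
    have h1 : (0 : ℝ) ≤ 17 / 20 - s := by linarith
    have h2 : 2 * (17 / 20 - s) ≤ 2 * ((N : ℝ) * s) := by linarith
    calc 2 * (17 / 20 - s) * (0.9305 : ℝ)
        ≤ (2 * ((N : ℝ) * s)) * (1 / (1 + (17 / 20 : ℝ) ^ 16)) :=
          mul_le_mul h2 hr (by norm_num) (by positivity)
      _ = ((2 * N : ℕ) : ℝ) * (s * (1 / (1 + (17 / 20 : ℝ) ^ 16))) := by push_cast; ring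
  unfold latticeEnergy
  linarith

/-- If `α ≥ 16` is an even integer, then for every `0 < s ≤ 1`,
`Σ_{n∈ℤ} s·f_α(sn) ≥ (2/3)·(1 + 1/(1 + 2^{−α}))`. -/
theorem statement8 (α : ℕ) (hα : Even α) (hα16 : 16 ≤ α) (s : ℝ) (hs0 : 0 < s) (hs1 : s ≤ 1) :
    (2 / 3) * (1 + 1 / (1 + (2 : ℝ) ^ (-(α : ℤ)))) ≤ latticeEnergy α s := by
  have ht : (0 : ℝ) < (2 : ℝ) ^ (-(α : ℤ)) := by positivity
  have hRHS : (2 / 3) * (1 + 1 / (1 + (2 : ℝ) ^ (-(α : ℤ)))) ≤ 4 / 3 := by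
    have h1 : 1 / (1 + (2 : ℝ) ^ (-(α : ℤ))) ≤ 1 := by
      rw [div_le_one (by linarith)]; linarith
    linarith
  refine hRHS.trans ?_
  rcases le_or_gt s (27 / 100) with hc | hc
  · exact keyC α hα hα16 s hs0 hc
  rcases le_or_gt s (7 / 20) with hc2 | hc2
  · have hk := key5 α hα hα16 s hs0 (7 / 20) (7 / 10) (by norm_num) (by norm_num)
      (by norm_num) (by norm_num) hc2 (by linarith)
    have hr1 : (0.9999 : ℝ) ≤ 1 / (1 + (7 / 20 : ℝ) ^ 16) := by norm_num
    have hr2 : (0.9966 : ℝ) ≤ 1 / (1 + (7 / 10 : ℝ) ^ 16) := by norm_num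
    have m1 : (27 / 100 : ℝ) * 0.9999 ≤ s * (1 / (1 + (7 / 20 : ℝ) ^ 16)) :=
      mul_le_mul hc.le hr1 (by norm_num) hs0.le
    have m2 : (27 / 100 : ℝ) * 0.9966 ≤ s * (1 / (1 + (7 / 10 : ℝ) ^ 16)) :=
      mul_le_mul hc.le hr2 (by norm_num) hs0.le
    linarith
  rcases le_or_gt s (9 / 20) with hc3 | hc3
  · have hk := key5 α hα hα16 s hs0 (9 / 20) (9 / 10) (by norm_num) (by norm_num)
      (by norm_num) (by norm_num) hc3 (by linarith)
    have hr1 : (0.9999 : ℝ) ≤ 1 / (1 + (9 / 20 : ℝ) ^ 16) := by norm_num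
    have hr2 : (0.8436 : ℝ) ≤ 1 / (1 + (9 / 10 : ℝ) ^ 16) := by norm_num
    have m1 : (7 / 20 : ℝ) * 0.9999 ≤ s * (1 / (1 + (9 / 20 : ℝ) ^ 16)) :=
      mul_le_mul hc2.le hr1 (by norm_num) hs0.le
    have m2 : (7 / 20 : ℝ) * 0.8436 ≤ s * (1 / (1 + (9 / 10 : ℝ) ^ 16)) :=
      mul_le_mul hc2.le hr2 (by norm_num) hs0.le
    linarith
  rcases le_or_gt s (3 / 5) with hc4 | hc4
  · have hk := key3 α hα hα16 s hs0 (3 / 5) (by norm_num) (by norm_num) hc4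
    have hr : (0.9997 : ℝ) ≤ 1 / (1 + (3 / 5 : ℝ) ^ 16) := by norm_num
    have m1 : (9 / 20 : ℝ) * 0.9997 ≤ s * (1 / (1 + (3 / 5 : ℝ) ^ 16)) :=
      mul_le_mul hc3.le hr (by norm_num) hs0.le
    linarith
  rcases le_or_gt s (4 / 5) with hc5 | hc5
  · have hk := key3 α hα hα16 s hs0 (4 / 5) (by norm_num) (by norm_num) hc5
    have hr : (0.97 : ℝ) ≤ 1 / (1 + (4 / 5 : ℝ) ^ 16) := by norm_num
    have m1 : (3 / 5 : ℝ) * 0.97 ≤ s * (1 / (1 + (4 / 5 : ℝ) ^ 16)) :=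
      mul_le_mul hc4.le hr (by norm_num) hs0.le
    linarith
  · have hk := key3 α hα hα16 s hs0 1 (by norm_num) (by norm_num) hs1
    have hr : (0.5 : ℝ) ≤ 1 / (1 + (1 : ℝ) ^ 16) := by norm_num
    have m1 : (4 / 5 : ℝ) * 0.5 ≤ s * (1 / (1 + (1 : ℝ) ^ 16)) :=
      mul_le_mul hc5.le hr (by norm_num) hs0.le
    linarith
end

section
/- Let α ≥ 16 be an even integer and set ŝ = (2α)^{1/α}. Then Σ_{n∈ℤ} ŝ·f_α(ŝ n) ≤ (2α)^{1/α}·(1 + 1/α + (1/(α·2^α))·(α+1)/(α−1)). -/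
private lemma key_ineq (α : ℕ) (h : 16 ≤ α) : 9 * (α - 1) * 2 ^ α ≤ 4 * 3 ^ α := by
  induction α, h using Nat.le_induction with
  | base => norm_num
  | succ n hn ih =>
    have h2 : 18 * n ≤ 27 * (n - 1) := by omega
    calc 9 * (n + 1 - 1) * 2 ^ (n + 1) = (18 * n) * 2 ^ n := by
          rw [Nat.add_sub_cancel, pow_succ]; ring
      _ ≤ (27 * (n - 1)) * 2 ^ n := Nat.mul_le_mul_right _ h2
      _ = 3 * (9 * (n - 1) * 2 ^ n) := by ring
      _ ≤ 3 * (4 * 3 ^ n) := Nat.mul_le_mul_left _ ih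
      _ = 4 * 3 ^ (n + 1) := by ring


set_option maxHeartbeats 1000000 in
/-- If `α ≥ 16` is an even integer and `ŝ = (2α)^{1/α}`, then
`Σ_{n∈ℤ} ŝ·f_α(ŝn) ≤ (2α)^{1/α}·(1 + 1/α + (1/(α·2^α))·(α+1)/(α−1))`. -/
theorem statement9 (α : ℕ) (hα : Even α) (hα16 : 16 ≤ α) :
    latticeEnergy α ((2 * (α : ℝ)) ^ ((1 : ℝ) / (α : ℝ)))
      ≤ (2 * (α : ℝ)) ^ ((1 : ℝ) / (α : ℝ)) *
        (1 + 1 / (α : ℝ) + (1 / ((α : ℝ) * 2 ^ α)) * (((α : ℝ) + 1) / ((α : ℝ) - 1))) := by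
  have hα16' : (16 : ℝ) ≤ (α : ℝ) := by exact_mod_cast hα16
  have hαpos : (0 : ℝ) < α := by linarith
  have h2α : (0 : ℝ) < 2 * α := by linarith
  set t : ℝ := (2 * (α : ℝ)) ^ ((1 : ℝ) / (α : ℝ)) with ht_def
  have ht : 0 < t := Real.rpow_pos_of_pos h2α _
  have htα : t ^ α = 2 * α := by
    rw [ht_def, ← Real.rpow_natCast ((2 * (α:ℝ)) ^ ((1:ℝ)/(α:ℝ))) α,
      ← Real.rpow_mul h2α.le, one_div, inv_mul_cancel₀ (ne_of_gt hαpos), Real.rpow_one]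
  set g : ℕ → ℝ := fun n => t * (1 / (1 + 2 * (α:ℝ) * (n : ℝ) ^ α)) with hg_def
  set F : ℤ → ℝ := fun n => t * (1 / (1 + (t * (n : ℝ)) ^ α)) with hF_def
  have hFnat : ∀ n : ℕ, F (n : ℤ) = g n := by
    intro n
    simp only [hF_def, hg_def, Int.cast_natCast, mul_pow, htα]
  have hFneg : ∀ n : ℕ, F (-(n + 1)) = g (n + 1) := by
    intro n
    simp only [hF_def, hg_def]
    rw [show ((-((n:ℤ) + 1) : ℤ) : ℝ) = -((n:ℝ) + 1) by push_cast; ring]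
    rw [show t * -((n:ℝ) + 1) = -(t * ((n:ℝ)+1)) by ring, hα.neg_pow, mul_pow, htα]
    push_cast
    ring_nf
  -- nonnegativity of g
  have hg_nonneg : ∀ n : ℕ, 0 ≤ g n := by
    intro n
    have : (0:ℝ) < 1 + 2 * (α:ℝ) * (n:ℝ) ^ α := by positivity
    positivity
  -- majorant for summability
  have hmaj : ∀ n : ℕ, g (n + 1) ≤ t * (1 / ((n : ℝ) + 1) ^ 2) := by
    intro n
    have h1 : (1:ℝ) ≤ (n:ℝ) + 1 := by
      have : (0:ℝ) ≤ (n:ℝ) := n.cast_nonneg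
      linarith
    have hpow : ((n:ℝ) + 1) ^ 2 ≤ ((n:ℝ) + 1) ^ α :=
      pow_le_pow_right₀ h1 (by omega)
    have hden : ((n:ℝ) + 1) ^ 2 ≤ 1 + 2 * (α:ℝ) * ((n:ℝ) + 1) ^ α := by
      nlinarith [pow_nonneg (by positivity : (0:ℝ) ≤ (n:ℝ)+1) α]
    have := one_div_le_one_div_of_le (by positivity) hden
    simp only [hg_def]
    push_cast
    exact mul_le_mul_of_nonneg_left this ht.le
  have hsum2 : Summable (fun n : ℕ => t * (1 / ((n : ℝ) + 1) ^ 2)) := by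
    have h0 : Summable (fun n : ℕ => 1 / (n : ℝ) ^ 2) :=
      Real.summable_one_div_nat_pow.mpr (by norm_num)
    have h1 : Summable (fun n : ℕ => 1 / ((n : ℝ) + 1) ^ 2) := by
      have := (summable_nat_add_iff 1).mpr h0
      exact this.congr fun n => by push_cast; ring
    exact h1.mul_left t
  have hgs1 : Summable (fun n : ℕ => g (n + 1)) :=
    Summable.of_nonneg_of_le (fun n => hg_nonneg _) hmaj hsum2
  have hgs : Summable g := (summable_nat_add_iff 1).mp hgs1
  have hFpos : Summable (fun n : ℕ => F n) := hgs.congr fun n => (hFnat n).symm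
  have hFneg' : Summable (fun n : ℕ => F (-(n + 1))) :=
    hgs1.congr fun n => (hFneg n).symm
  -- decompose the ℤ-sum
  have hdec : latticeEnergy α t = g 0 + 2 * ∑' n : ℕ, g (n + 1) := by
    have h1 : latticeEnergy α t = (∑' n : ℕ, F n) + ∑' n : ℕ, F (-(n + 1)) :=
      tsum_of_nat_of_neg_add_one hFpos hFneg'
    rw [h1, tsum_congr hFnat, tsum_congr hFneg, Summable.tsum_eq_zero_add hgs]
    ring
  have hg0 : g 0 = t := by
    simp [hg_def, zero_pow (by omega : α ≠ 0)]
  -- split the ℕ-sum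
  have hgs2 : Summable (fun n : ℕ => g (n + 2)) := (summable_nat_add_iff 2).mpr hgs
  have hgs3 : Summable (fun n : ℕ => g (n + 3)) := (summable_nat_add_iff 3).mpr hgs
  have hsplit : ∑' n : ℕ, g (n + 1) = g 1 + g 2 + ∑' n : ℕ, g (n + 3) := by
    rw [Summable.tsum_eq_zero_add hgs1]
    have h2' : ∑' n : ℕ, g (n + 1 + 1) = ∑' n : ℕ, g (n + 2) :=
      tsum_congr fun n => by congr 1
    rw [h2', Summable.tsum_eq_zero_add hgs2]
    have h3' : ∑' n : ℕ, g (n + 1 + 2) = ∑' n : ℕ, g (n + 3) :=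
      tsum_congr fun n => by congr 1
    rw [h3']
    norm_num [add_assoc]
  -- bound individual terms
  have hg1 : g 1 ≤ t * (1 / (2 * (α:ℝ))) := by
    simp only [hg_def]
    push_cast
    have : (1:ℝ) / (1 + 2 * (α:ℝ) * 1 ^ α) ≤ 1 / (2 * (α:ℝ)) := by
      apply one_div_le_one_div_of_le h2α
      simp
    exact mul_le_mul_of_nonneg_left this ht.le
  have h2pow : (0:ℝ) < 2 ^ α := by positivity
  have hg2 : g 2 ≤ t * (1 / (2 * (α:ℝ) * 2 ^ α)) := by
    simp only [hg_def]
    have : (1:ℝ) / (1 + 2 * (α:ℝ) * (2:ℝ) ^ α) ≤ 1 / (2 * (α:ℝ) * 2 ^ α) := by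
      apply one_div_le_one_div_of_le (by positivity)
      push_cast; linarith
    push_cast
    exact mul_le_mul_of_nonneg_left this ht.le
  -- tail bound
  have h3pow : (0:ℝ) < 3 ^ (α - 2) := by positivity
  set C : ℝ := t / (2 * (α:ℝ) * 3 ^ (α - 2)) with hC_def
  have hC : 0 < C := by positivity
  have htail : ∑' n : ℕ, g (n + 3) ≤ C / 2 := by
    apply Real.tsum_le_of_sum_range_le (fun n => hg_nonneg _)
    intro N
    have hterm : ∀ i : ℕ, g (i + 3) ≤ C * (1 / ((i:ℝ) + 2) - 1 / ((i:ℝ) + 3)) := by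
      intro i
      have hx2 : (0:ℝ) < (i:ℝ) + 2 := by positivity
      have hx3 : (0:ℝ) < (i:ℝ) + 3 := by positivity
      have heq : 1 / ((i:ℝ) + 2) - 1 / ((i:ℝ) + 3) = 1 / (((i:ℝ) + 2) * ((i:ℝ) + 3)) := by
        field_simp
        ring
      rw [heq]
      have hsplitpow : ((i:ℝ) + 3) ^ α = ((i:ℝ) + 3) ^ (α - 2) * ((i:ℝ) + 3) ^ 2 := by
        rw [← pow_add]
        congr 1
        omega
      have h3le : (3:ℝ) ^ (α - 2) ≤ ((i:ℝ) + 3) ^ (α - 2) :=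
        pow_le_pow_left₀ (by norm_num) (by linarith [Nat.cast_nonneg (α := ℝ) i]) _
      have hsq : ((i:ℝ) + 2) * ((i:ℝ) + 3) ≤ ((i:ℝ) + 3) ^ 2 := by nlinarith
      have hprod : (3:ℝ) ^ (α - 2) * (((i:ℝ) + 2) * ((i:ℝ) + 3))
          ≤ ((i:ℝ) + 3) ^ (α - 2) * ((i:ℝ) + 3) ^ 2 :=
        mul_le_mul h3le hsq (by positivity) (by positivity)
      have hden : 2 * (α:ℝ) * (3 ^ (α - 2) * (((i:ℝ) + 2) * ((i:ℝ) + 3)))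
          ≤ 1 + 2 * (α:ℝ) * ((i:ℝ) + 3) ^ α := by
        rw [hsplitpow]
        have := mul_le_mul_of_nonneg_left hprod h2α.le
        linarith
      have hdpos : (0:ℝ) < 2 * (α:ℝ) * (3 ^ (α - 2) * (((i:ℝ) + 2) * ((i:ℝ) + 3))) := by
        positivity
      have hfrac := one_div_le_one_div_of_le hdpos hden
      have : g (i + 3) ≤ t * (1 / (2 * (α:ℝ) * (3 ^ (α - 2) * (((i:ℝ) + 2) * ((i:ℝ) + 3))))) := by
        simp only [hg_def]
        push_cast
        exact mul_le_mul_of_nonneg_left hfrac ht.le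
      refine this.trans (le_of_eq ?_)
      rw [hC_def, div_mul_div_comm, mul_one, mul_one_div]
      congr 1
      ring
    calc ∑ i ∈ Finset.range N, g (i + 3)
        ≤ ∑ i ∈ Finset.range N, C * (1 / ((i:ℝ) + 2) - 1 / ((i:ℝ) + 3)) :=
          Finset.sum_le_sum fun i _ => hterm i
      _ = C * ∑ i ∈ Finset.range N, ((fun j : ℕ => 1 / ((j:ℝ) + 2)) i
            - (fun j : ℕ => 1 / ((j:ℝ) + 2)) (i + 1)) := by
          rw [Finset.mul_sum]
          refine Finset.sum_congr rfl fun i _ => ?_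
          push_cast
          ring
      _ = C * (1 / 2 - 1 / ((N:ℝ) + 2)) := by
          rw [Finset.sum_range_sub' (fun j : ℕ => 1 / ((j:ℝ) + 2)) N]
          norm_num
      _ ≤ C / 2 := by
          have hN : (0:ℝ) ≤ 1 / ((N:ℝ) + 2) := by positivity
          nlinarith [hC.le]
  -- compare C/2 with target tail coefficient
  have hkey : (9:ℝ) * ((α:ℝ) - 1) * 2 ^ α ≤ 4 * 3 ^ α := by
    have := key_ineq α hα16
    have hcast : ((α - 1 : ℕ) : ℝ) = (α:ℝ) - 1 := by
      have : 1 ≤ α := by omega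
      push_cast [this]
      ring
    calc (9:ℝ) * ((α:ℝ) - 1) * 2 ^ α = ((9 * (α - 1) * 2 ^ α : ℕ) : ℝ) := by
          push_cast [hcast]; ring
      _ ≤ ((4 * 3 ^ α : ℕ) : ℝ) := by exact_mod_cast this
      _ = 4 * 3 ^ α := by push_cast; ring
  have hαm1 : (0:ℝ) < (α:ℝ) - 1 := by linarith
  have h3eq : (3:ℝ) ^ α = 9 * 3 ^ (α - 2) := by
    calc (3:ℝ) ^ α = 3 ^ (α - 2 + 2) := by congr 1; omega
      _ = 9 * 3 ^ (α - 2) := by rw [pow_add]; ring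
  have htailC : C / 2 ≤ t / ((α:ℝ) * 2 ^ α * ((α:ℝ) - 1)) := by
    rw [hC_def, div_div]
    rw [div_le_div_iff₀ (by positivity) (by positivity)]
    have hstep : ((α:ℝ) - 1) * 2 ^ α ≤ 4 * 3 ^ (α - 2) := by nlinarith [hkey, h3eq]
    nlinarith [mul_le_mul_of_nonneg_left hstep (mul_nonneg ht.le hαpos.le)]
  -- final assembly
  rw [hdec, hg0, hsplit]
  have hfinal : t + 2 * (t * (1 / (2 * (α:ℝ))) + t * (1 / (2 * (α:ℝ) * 2 ^ α))
      + t / ((α:ℝ) * 2 ^ α * ((α:ℝ) - 1)))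
      = t * (1 + 1 / (α : ℝ) + (1 / ((α : ℝ) * 2 ^ α)) * (((α : ℝ) + 1) / ((α : ℝ) - 1))) := by
    field_simp
    ring
  have hb := htail.trans htailC
  linarith [hg1, hg2, hb, hfinal.le, hfinal.ge]
end

section
/- Let α > 2 be an even integer, let s_α > 0 be a minimizer of t ↦ Σ_{n∈ℤ} t·f_α(t n) over t > 0, and set F_α(x) = 1/(1 + s_α^α x^α). Then Σ_{n∈ℤ} (F_α(n) + n·F_α′(n)) = 0, where F_α′ denotes the derivative of F_α. -/
/-- First-order condition for the minimizer: `Σ_{n∈ℤ} (F_α(n) + n·F_α′(n)) = 0`. -/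
theorem statement12 (α : ℕ) (hα : Even α) (hα2 : 2 < α) (s : ℝ) (hs : 0 < s)
    (hmin : ∀ t : ℝ, 0 < t → latticeEnergy α s ≤ latticeEnergy α t)
    (F : ℝ → ℝ) (hF : ∀ x, F x = 1 / (1 + s ^ α * x ^ α)) :
    ∑' n : ℤ, (F n + (n : ℝ) * deriv F n) = 0 := by
  have hα0 : α ≠ 0 := by omega
  have hα1 : 1 ≤ α := by omega
  -- basics
  have hpos : ∀ x : ℝ, 0 < 1 + x ^ α := fun x => by
    have := hα.pow_nonneg x; linarith
  have hne : ∀ x : ℝ, 1 + x ^ α ≠ 0 := fun x => (hpos x).ne'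
  set f : ℤ → ℝ → ℝ := fun n t => t * (1 / (1 + (t * (n : ℝ)) ^ α)) with hf_def
  set f' : ℤ → ℝ → ℝ := fun n t =>
    (1 + (1 - (α : ℝ)) * (t * (n : ℝ)) ^ α) / (1 + (t * (n : ℝ)) ^ α) ^ 2 with hf'_def
  -- derivative of each term
  have hderiv : ∀ (n : ℤ) (t : ℝ), HasDerivAt (f n) (f' n t) t := by
    intro n t
    have h1 : HasDerivAt (fun t : ℝ => t * (n : ℝ)) (n : ℝ) t := hasDerivAt_mul_const _
    have h2 : HasDerivAt (fun t : ℝ => (t * (n : ℝ)) ^ α)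
        ((α : ℝ) * (t * (n : ℝ)) ^ (α - 1) * (n : ℝ)) t :=
      (hasDerivAt_pow α (t * (n : ℝ))).comp t h1
    have h3 : HasDerivAt (fun t : ℝ => 1 + (t * (n : ℝ)) ^ α)
        ((α : ℝ) * (t * (n : ℝ)) ^ (α - 1) * (n : ℝ)) t := h2.const_add 1
    have h4 := (hasDerivAt_id t).div h3 (hne _)
    have hkey : t * ((α : ℝ) * (t * (n : ℝ)) ^ (α - 1) * (n : ℝ))
        = (α : ℝ) * (t * (n : ℝ)) ^ α := by
      have : (t * (n : ℝ)) ^ (α - 1) * (t * (n : ℝ)) = (t * (n : ℝ)) ^ α := by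
        rw [← pow_succ]; congr 1; omega
      calc t * ((α : ℝ) * (t * (n : ℝ)) ^ (α - 1) * (n : ℝ))
          = (α : ℝ) * ((t * (n : ℝ)) ^ (α - 1) * (t * (n : ℝ))) := by ring
        _ = (α : ℝ) * (t * (n : ℝ)) ^ α := by rw [this]
    have : f n = fun t : ℝ => t / (1 + (t * (n : ℝ)) ^ α) := by
      funext t; simp [hf_def, mul_one_div, div_eq_mul_inv]
    rw [this]
    refine h4.congr_deriv ?_
    rw [hf'_def]
    simp only [id_eq, one_mul]
    rw [hkey]
    ring_nf
  -- the bounding sequence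
  set C : ℝ := (α : ℝ) * (2 / s) ^ α with hC_def
  set u : ℤ → ℝ := fun n => C / (n : ℝ) ^ α + Set.indicator {(0 : ℤ)} (fun _ => (1 : ℝ)) n
    with hu_def
  have hu_sum : Summable u := by
    apply Summable.add
    · simpa [div_eq_mul_inv, one_div] using
        (Real.summable_one_div_int_pow.mpr (by omega : 1 < α)).mul_left C
    · exact summable_of_ne_finset_zero (s := {(0 : ℤ)}) (fun n hn => by
        simp at hn; simp [Set.indicator_of_notMem, hn])
  -- the bound on derivatives on Ioi (s/2)
  have hbound : ∀ (n : ℤ) (t : ℝ), t ∈ Set.Ioi (s / 2) → ‖f' n t‖ ≤ u n := by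
    intro n t ht
    have ht2 : (0 : ℝ) < s / 2 := by linarith
    have htpos : 0 < t := lt_trans ht2 ht
    rcases eq_or_ne n 0 with rfl | hn
    · have : f' 0 t = 1 := by
        simp [hf'_def, zero_pow hα0]
      rw [this, hu_def]
      norm_num [zero_pow hα0, Set.indicator]
    · -- n ≠ 0
      have hX : 0 < (t * (n : ℝ)) ^ α := by
        have hn' : (n : ℝ) ≠ 0 := Int.cast_ne_zero.mpr hn
        exact hα.pow_pos (mul_ne_zero htpos.ne' hn')
      set X : ℝ := (t * (n : ℝ)) ^ α with hX_def
      have h1X : (0:ℝ) < 1 + X := by linarith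
      have hnum : |1 + (1 - (α : ℝ)) * X| ≤ (α : ℝ) * (1 + X) := by
        rw [abs_le]
        have hαR : (1 : ℝ) ≤ (α : ℝ) := by exact_mod_cast hα1
        constructor <;> nlinarith
      have hstep1 : ‖f' n t‖ ≤ (α : ℝ) / (1 + X) := by
        rw [hf'_def]
        simp only [← hX_def, norm_div, Real.norm_eq_abs]
        rw [abs_of_pos (by positivity : (0:ℝ) < (1+X)^2)]
        rw [div_le_div_iff₀ (by positivity) h1X]
        calc |1 + (1 - (α : ℝ)) * X| * (1 + X) ≤ (α : ℝ) * (1 + X) * (1 + X) := by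
              apply mul_le_mul_of_nonneg_right hnum h1X.le
          _ = (α : ℝ) * (1 + X) ^ 2 := by ring
      have hstep2 : (α : ℝ) / (1 + X) ≤ (α : ℝ) / X :=
        div_le_div_of_nonneg_left (by positivity) hX (by linarith)
      have hX_lb : (s / 2) ^ α * (n : ℝ) ^ α ≤ X := by
        rw [hX_def, mul_pow]
        apply mul_le_mul_of_nonneg_right _ (hα.pow_nonneg _)
        exact pow_le_pow_left₀ ht2.le (le_of_lt ht) α
      have hn' : (n : ℝ) ≠ 0 := Int.cast_ne_zero.mpr hn
      have hnpow : (0 : ℝ) < (n : ℝ) ^ α := hα.pow_pos hn'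
      have hstep3 : (α : ℝ) / X ≤ C / (n : ℝ) ^ α := by
        have hC : C / (n : ℝ) ^ α = (α : ℝ) / ((s / 2) ^ α * (n : ℝ) ^ α) := by
          rw [hC_def]
          rw [div_pow]
          field_simp
          rw [← mul_pow]; congr 1; ring
        rw [hC]
        exact div_le_div_of_nonneg_left (by positivity)
          (by positivity) hX_lb
      have hind : u n = C / (n : ℝ) ^ α := by
        rw [hu_def]; simp [Set.indicator_of_notMem, hn]
      rw [hind]
      linarith
  -- summability at s
  have hfs_sum : Summable fun n => f n s := by
    apply Summable.of_norm
    apply Summable.of_nonneg_of_le (fun n => norm_nonneg _)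
      (f := fun n : ℤ => s / s ^ α / (n : ℝ) ^ α + Set.indicator {(0:ℤ)} (fun _ => s) n)
    · intro n
      rcases eq_or_ne n 0 with rfl | hn
      · have : f 0 s = s := by simp [hf_def, zero_pow hα0]
        rw [this]
        have : s / s ^ α / ((0:ℤ) : ℝ) ^ α = 0 := by simp [zero_pow hα0]
        rw [Real.norm_eq_abs, abs_of_pos hs, this]
        simp
      · have hn' : (n : ℝ) ≠ 0 := Int.cast_ne_zero.mpr hn
        have hX : 0 < (s * (n : ℝ)) ^ α := hα.pow_pos (mul_ne_zero hs.ne' hn')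
        have hfv : f n s = s / (1 + (s * (n : ℝ)) ^ α) := by
          simp [hf_def, mul_one_div, div_eq_mul_inv]
        rw [hfv, Real.norm_eq_abs, abs_of_pos (by positivity)]
        have h1 : s / (1 + (s * (n : ℝ)) ^ α) ≤ s / (s * (n : ℝ)) ^ α :=
          div_le_div_of_nonneg_left hs.le hX (by linarith)
        have h2 : s / (s * (n : ℝ)) ^ α = s / s ^ α / (n : ℝ) ^ α := by
          rw [mul_pow, div_div]
        rw [Set.indicator_of_notMem (by simpa using hn)]
        rw [h2] at h1
        linarith
    · apply Summable.add
      · simpa [div_eq_mul_inv, one_div] using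
          (Real.summable_one_div_int_pow.mpr (by omega : 1 < α)).mul_left (s / s ^ α)
      · exact summable_of_ne_finset_zero (s := {(0 : ℤ)}) (fun n hn => by
          simp at hn; simp [Set.indicator_of_notMem, hn])
  -- the derivative of the lattice energy
  have hE : HasDerivAt (latticeEnergy α) (∑' n : ℤ, f' n s) s := by
    have := hasDerivAt_tsum_of_isPreconnected hu_sum (isOpen_Ioi (a := s / 2))
      isPreconnected_Ioi (fun n y _ => hderiv n y) hbound
      (show s ∈ Set.Ioi (s/2) by rw [Set.mem_Ioi]; linarith) hfs_sum
      (show s ∈ Set.Ioi (s/2) by rw [Set.mem_Ioi]; linarith)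
    exact this
  -- minimality gives derivative zero
  have hmin' : IsLocalMin (latticeEnergy α) s := by
    apply IsMinOn.isLocalMin (s := Set.Ioi (0 : ℝ))
    · intro t ht; exact hmin t ht
    · exact (isOpen_Ioi).mem_nhds hs
  have hzero : ∑' n : ℤ, f' n s = 0 := hmin'.hasDerivAt_eq_zero hE
  -- identify the terms
  have hterm : ∀ n : ℤ, F n + (n : ℝ) * deriv F n = f' n s := by
    intro n
    have hFe : F = fun x : ℝ => (1 + s ^ α * x ^ α)⁻¹ := by
      funext x; rw [hF x, one_div]
    have hden : ∀ x : ℝ, 1 + s ^ α * x ^ α ≠ 0 := fun x => by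
      have h1 := hα.pow_nonneg x
      have : 0 ≤ s ^ α * x ^ α := mul_nonneg (le_of_lt (by positivity)) h1
      positivity
    have hD : HasDerivAt (fun x : ℝ => 1 + s ^ α * x ^ α)
        (s ^ α * ((α : ℝ) * (n : ℝ) ^ (α - 1))) n :=
      ((hasDerivAt_pow α ((n : ℝ))).const_mul (s ^ α)).const_add 1
    have hFd : HasDerivAt F
        (-(s ^ α * ((α : ℝ) * (n : ℝ) ^ (α - 1))) / (1 + s ^ α * (n : ℝ) ^ α) ^ 2) n := by
      rw [hFe]; exact hD.inv (hden _)
    rw [hF, hFd.deriv]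
    simp only [hf'_def]
    have hpow : (n : ℝ) ^ (α - 1) * (n : ℝ) = (n : ℝ) ^ α := by
      rw [← pow_succ]; congr 1; omega
    have hmp : (s * (n : ℝ)) ^ α = s ^ α * (n : ℝ) ^ α := mul_pow s _ α
    rw [hmp]
    have hd := hden (n : ℝ)
    rw [← hpow] at hd ⊢
    field_simp
    ring
  calc ∑' n : ℤ, (F n + (n : ℝ) * deriv F n) = ∑' n : ℤ, f' n s := tsum_congr hterm
    _ = 0 := hzero
end

section
/- Let α > 2 be an even integer. Then for every t ≥ 1, |Σ_{n≥2} 2·(f_α(nt) + t·n·f_α′(nt))| ≤ (α+1)²/(2^{α−1}(α−1)), where f_α′ denotes the derivative of f_α and the sum ranges over integers n ≥ 2. (This sum is the derivative with respect to t of t ↦ 2Σ_{n≥2} t·f_α(nt).) -/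
open Filter Finset

/-- Bernoulli-based telescoping comparison. -/
lemma tele_aux (α : ℕ) (hα : 2 < α) (x : ℝ) (hx : 1 ≤ x) :
    1 / (x + 1) ^ α ≤ (1 / ((α : ℝ) - 1)) * (1 / x ^ (α - 1) - 1 / (x + 1) ^ (α - 1)) := by
  have hx0 : (0 : ℝ) < x := by linarith
  have hαR : (2 : ℝ) < (α : ℝ) := by exact_mod_cast hα
  have hA : (0 : ℝ) < x ^ (α - 1) := by positivity
  have hB : (0 : ℝ) < (x + 1) ^ (α - 1) := by positivity
  have hAB : x ^ (α - 1) ≤ (x + 1) ^ (α - 1) := by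
    apply pow_le_pow_left₀ (by linarith) (by linarith)
  -- Bernoulli: x^α + (α-1) x^(α-1) ≤ x (x+1)^(α-1)
  have hb : (1 : ℝ) + ((α - 1 : ℕ) : ℝ) * (1 / x) ≤ (1 + 1 / x) ^ (α - 1) :=
    one_add_mul_le_pow (le_trans (by norm_num) (by positivity : (0:ℝ) ≤ 1 / x)) _
  have hcast : ((α - 1 : ℕ) : ℝ) = (α : ℝ) - 1 := by
    have : 1 ≤ α := by omega
    push_cast [this]; ring
  rw [hcast] at hb
  have hcore : x ^ α + ((α : ℝ) - 1) * x ^ (α - 1) ≤ x * (x + 1) ^ (α - 1) := by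
    have h1 : x ^ α * (1 + ((α : ℝ) - 1) * (1 / x)) ≤ x ^ α * (1 + 1 / x) ^ (α - 1) :=
      mul_le_mul_of_nonneg_left hb (by positivity)
    have hxa : x ^ α = x * x ^ (α - 1) := by
      rw [← pow_succ']
      congr 1; omega
    have h2 : x ^ α * (1 + ((α : ℝ) - 1) * (1 / x)) = x ^ α + ((α : ℝ) - 1) * x ^ (α - 1) := by
      rw [hxa]; field_simp
    have h3 : x ^ α * (1 + 1 / x) ^ (α - 1) = x * (x + 1) ^ (α - 1) := by
      rw [hxa, mul_assoc, ← mul_pow]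
      congr 2
      field_simp
    rw [h2, h3] at h1
    exact h1
  -- Now the goal
  have hC : (0 : ℝ) < (x + 1) ^ α := by positivity
  have hxa : x ^ α = x * x ^ (α - 1) := by
    rw [← pow_succ']; congr 1; omega
  have hxa' : (x + 1) ^ α = (x + 1) * (x + 1) ^ (α - 1) := by
    rw [← pow_succ']; congr 1; omega
  have hd : 1 / x ^ (α - 1) - 1 / (x + 1) ^ (α - 1)
      = ((x + 1) ^ (α - 1) - x ^ (α - 1)) / (x ^ (α - 1) * (x + 1) ^ (α - 1)) := by
    field_simp
  rw [hd, one_div_mul_eq_div, div_div, div_le_div_iff₀ hC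
    (mul_pos (mul_pos hA hB) (by linarith)), one_mul, hxa']
  rw [hxa] at hcore
  nlinarith [mul_le_mul_of_nonneg_left hcore hB.le,
    mul_le_mul_of_nonneg_left hAB (mul_pos hB hB).le,
    mul_pos hA hB, mul_pos hB hB]

/-- Telescoping sum. -/
lemma tele_hasSum (α : ℕ) (hα : 2 < α) :
    HasSum (fun n : ℕ => 1 / ((n : ℝ) + 2) ^ (α - 1) - 1 / ((n : ℝ) + 3) ^ (α - 1))
      (1 / 2 ^ (α - 1)) := by
  set b : ℕ → ℝ := fun n => 1 / ((n : ℝ) + 2) ^ (α - 1) with hb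
  have hbn : ∀ n : ℕ, b (n + 1) = 1 / ((n : ℝ) + 3) ^ (α - 1) := by
    intro n; simp only [hb]; push_cast; ring_nf
  have hmono : ∀ n : ℕ, 0 ≤ b n - b (n + 1) := by
    intro n
    have h1 : (0:ℝ) < ((n : ℝ) + 2) ^ (α - 1) := by positivity
    have h2 : ((n : ℝ) + 2) ^ (α - 1) ≤ (((n:ℕ)+1 : ℝ) + 2) ^ (α - 1) := by
      apply pow_le_pow_left₀ (by positivity) (by push_cast; linarith)
    have := one_div_le_one_div_of_le h1 h2
    simp only [hb]
    push_cast at this ⊢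
    linarith
  have key : HasSum (fun n : ℕ => b n - b (n + 1)) (b 0) := by
    rw [hasSum_iff_tendsto_nat_of_nonneg hmono]
    have hsum : ∀ n : ℕ, ∑ i ∈ range n, (b i - b (i + 1)) = b 0 - b n :=
      fun n => Finset.sum_range_sub' b n
    simp only [hsum]
    have hb0 : Tendsto b atTop (nhds 0) := by
      apply squeeze_zero (fun n => by positivity) (g := fun n : ℕ => 1 / ((n : ℝ) + 1))
      · intro n
        apply one_div_le_one_div_of_le (by positivity)
        calc ((n : ℝ) + 1) ≤ ((n : ℝ) + 2) ^ 1 := by norm_num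
          _ ≤ ((n : ℝ) + 2) ^ (α - 1) := by
              apply pow_le_pow_right₀ (by linarith [Nat.cast_nonneg (α := ℝ) n])
              omega
      · exact tendsto_one_div_add_atTop_nhds_zero_nat
    have := (tendsto_const_nhds (x := b 0) (f := atTop (α := ℕ))).sub hb0
    simpa using this
  have : b 0 = 1 / 2 ^ (α - 1) := by norm_num [hb]
  rw [this] at key
  convert key using 2 with n
  rw [hbn n]

lemma summable_aux (α : ℕ) (hα : 2 < α) :
    Summable (fun n : ℕ => 1 / ((n : ℝ) + 2) ^ α) := by
  have h := (Real.summable_one_div_nat_pow (p := α)).mpr (by omega)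
  have h2 := (summable_nat_add_iff (f := fun n : ℕ => 1 / (n : ℝ) ^ α) 2).mpr h
  convert h2 using 2 with n
  case e'_3 => rfl
  push_cast; ring_nf

set_option maxHeartbeats 1000000 in
/-- The sum bound: ∑_{n≥0} 1/(n+2)^α ≤ (α+1)/(2^α (α-1)). -/
lemma sum_bound (α : ℕ) (hα : 2 < α) :
    ∑' n : ℕ, 1 / ((n : ℝ) + 2) ^ α ≤ ((α : ℝ) + 1) / (2 ^ α * ((α : ℝ) - 1)) := by
  have hαR : (2 : ℝ) < (α : ℝ) := by exact_mod_cast hα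
  have hv := summable_aux α hα
  rw [Summable.tsum_eq_zero_add hv]
  have hshift : ∀ n : ℕ, 1 / (((n + 1 : ℕ) : ℝ) + 2) ^ α ≤
      (1 / ((α : ℝ) - 1)) * (1 / ((n : ℝ) + 2) ^ (α - 1) - 1 / ((n : ℝ) + 3) ^ (α - 1)) := by
    intro n
    have := tele_aux α hα ((n : ℝ) + 2) (by linarith [Nat.cast_nonneg (α := ℝ) n])
    push_cast
    ring_nf at this ⊢
    exact this
  have hw : HasSum (fun n : ℕ => (1 / ((α : ℝ) - 1)) *
      (1 / ((n : ℝ) + 2) ^ (α - 1) - 1 / ((n : ℝ) + 3) ^ (α - 1)))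
      ((1 / ((α : ℝ) - 1)) * (1 / 2 ^ (α - 1))) := (tele_hasSum α hα).mul_left _
  have hT : ∑' n : ℕ, 1 / (((n + 1 : ℕ) : ℝ) + 2) ^ α ≤ (1 / ((α : ℝ) - 1)) * (1 / 2 ^ (α - 1)) := by
    rw [← hw.tsum_eq]
    exact Summable.tsum_le_tsum hshift ((summable_nat_add_iff 1).mpr hv) hw.summable
  have h0 : (1 / (((0 : ℕ) : ℝ) + 2) ^ α) = 1 / 2 ^ α := by norm_num
  have harith : 1 / (2:ℝ) ^ α + (1 / ((α : ℝ) - 1)) * (1 / 2 ^ (α - 1)) =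
      ((α : ℝ) + 1) / (2 ^ α * ((α : ℝ) - 1)) := by
    have h2a : (2:ℝ) ^ α = 2 * 2 ^ (α - 1) := by
      rw [← pow_succ']; congr 1; omega
    have hne : ((α : ℝ) - 1) ≠ 0 := by linarith
    have hne2 : (2:ℝ) ^ (α - 1) ≠ 0 := by positivity
    have gen : ∀ P c : ℝ, P ≠ 0 → c ≠ 0 →
        1 / (2 * P) + (1 / c) * (1 / P) = (c + 2) / (2 * P * c) := by
      intro P c hP hc; field_simp
    have hα1 : (α : ℝ) + 1 = ((α : ℝ) - 1) + 2 := by ring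
    rw [h2a, hα1]
    exact gen _ _ hne2 hne
  rw [h0, ← harith]
  linarith [hT]

/-- For an even integer `α > 2` and every `t ≥ 1`,
`|Σ_{n≥2} 2·(f_α(nt) + t·n·f_α′(nt))| ≤ (α+1)²/(2^{α−1}(α−1))`. -/
theorem statement13 (α : ℕ) (hα : Even α) (hα2 : 2 < α)
    (f : ℝ → ℝ) (hf : ∀ x, f x = 1 / (1 + x ^ α)) :
    ∀ t : ℝ, 1 ≤ t →
      |∑' n : ℕ, 2 * (f (((n : ℝ) + 2) * t) + t * ((n : ℝ) + 2) * deriv f (((n : ℝ) + 2) * t))|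
        ≤ ((α : ℝ) + 1) ^ 2 / (2 ^ (α - 1) * ((α : ℝ) - 1)) := by
  have hαR : (2 : ℝ) < (α : ℝ) := by exact_mod_cast hα2
  have hfe : f = fun y : ℝ => (1 + y ^ α)⁻¹ := funext fun y => by rw [hf, one_div]
  -- derivative formula
  have hderiv : ∀ x : ℝ, 0 < 1 + x ^ α →
      deriv f x = -((α : ℝ) * x ^ (α - 1)) / (1 + x ^ α) ^ 2 := by
    intro x hpos
    have h1 : HasDerivAt (fun y : ℝ => 1 + y ^ α) ((α : ℝ) * x ^ (α - 1)) x := by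
      simpa using (hasDerivAt_pow α x).const_add 1
    have h2 := h1.inv (ne_of_gt hpos)
    rw [hfe]
    exact h2.deriv
  intro t ht
  -- per-term bound
  have hterm : ∀ n : ℕ,
      ‖2 * (f (((n : ℝ) + 2) * t) + t * ((n : ℝ) + 2) * deriv f (((n : ℝ) + 2) * t))‖
        ≤ 2 * ((α : ℝ) + 1) * (1 / ((n : ℝ) + 2) ^ α) := by
    intro n
    have hn0 : (0 : ℝ) ≤ (n : ℝ) := Nat.cast_nonneg n
    set x : ℝ := ((n : ℝ) + 2) * t with hxdef
    have hx2 : (2 : ℝ) ≤ x := by nlinarith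
    have hx0 : (0 : ℝ) < x := by linarith
    have hN : (0 : ℝ) < ((n : ℝ) + 2) ^ α := by positivity
    have hNx : ((n : ℝ) + 2) ^ α ≤ x ^ α := by
      apply pow_le_pow_left₀ (by linarith) (by nlinarith)
    have hA : (0 : ℝ) < x ^ α := by positivity
    have hD : (0 : ℝ) < 1 + x ^ α := by linarith
    rw [hf, hderiv x hD]
    have htx : t * ((n : ℝ) + 2) = x := by rw [hxdef]; ring
    rw [htx]
    have hxa : x * x ^ (α - 1) = x ^ α := by
      rw [← pow_succ']; congr 1; omega
    have hexpr : 2 * (1 / (1 + x ^ α) + x * (-((α : ℝ) * x ^ (α - 1)) / (1 + x ^ α) ^ 2))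
        = 2 * (1 / (1 + x ^ α) - (α : ℝ) * x ^ α / (1 + x ^ α) ^ 2) := by
      rw [← hxa]; ring
    rw [hexpr, Real.norm_eq_abs]
    have hb1 : (0:ℝ) ≤ 1 / (1 + x ^ α) := by positivity
    have hb2 : (0:ℝ) ≤ (α : ℝ) * x ^ α / (1 + x ^ α) ^ 2 := by positivity
    have habs : |2 * (1 / (1 + x ^ α) - (α : ℝ) * x ^ α / (1 + x ^ α) ^ 2)|
        ≤ 2 * (1 / (1 + x ^ α) + (α : ℝ) * x ^ α / (1 + x ^ α) ^ 2) := by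
      rw [abs_mul, abs_two]
      gcongr
      rw [abs_sub_comm, abs_le]
      constructor <;> nlinarith [abs_nonneg ((α : ℝ) * x ^ α / (1 + x ^ α) ^ 2 - 1 / (1 + x ^ α))]
    apply habs.trans
    have h1 : 1 / (1 + x ^ α) ≤ 1 / ((n : ℝ) + 2) ^ α :=
      one_div_le_one_div_of_le hN (by linarith)
    have h2 : (α : ℝ) * x ^ α / (1 + x ^ α) ^ 2 ≤ (α : ℝ) * (1 / ((n : ℝ) + 2) ^ α) := by
      rw [div_le_iff₀ (by positivity)]
      have : (α : ℝ) * (1 / ((n : ℝ) + 2) ^ α) * (1 + x ^ α) ^ 2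
          = (α : ℝ) * ((1 + x ^ α) ^ 2 / ((n : ℝ) + 2) ^ α) := by ring
      rw [this]
      have hkey : x ^ α ≤ (1 + x ^ α) ^ 2 / ((n : ℝ) + 2) ^ α := by
        rw [le_div_iff₀ hN]
        nlinarith
      nlinarith
    nlinarith
  -- bounding series
  have hg : Summable (fun n : ℕ => 2 * ((α : ℝ) + 1) * (1 / ((n : ℝ) + 2) ^ α)) :=
    (summable_aux α hα2).mul_left _
  have hbound := tsum_of_norm_bounded hg.hasSum hterm
  rw [Real.norm_eq_abs] at hbound
  apply hbound.trans
  rw [tsum_mul_left]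
  have hS := sum_bound α hα2
  have hfinal : 2 * ((α : ℝ) + 1) * (((α : ℝ) + 1) / (2 ^ α * ((α : ℝ) - 1)))
      = ((α : ℝ) + 1) ^ 2 / (2 ^ (α - 1) * ((α : ℝ) - 1)) := by
    have h2a : (2:ℝ) ^ α = 2 * 2 ^ (α - 1) := by
      rw [← pow_succ']; congr 1; omega
    have hne : ((α : ℝ) - 1) ≠ 0 := by linarith
    have hne2 : (2:ℝ) ^ (α - 1) ≠ 0 := by positivity
    have gen : ∀ P c b : ℝ, P ≠ 0 → c ≠ 0 →
        2 * b * (b / (2 * P * c)) = b ^ 2 / (P * c) := by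
      intro P c b hP hc; field_simp
    rw [h2a]
    exact gen _ _ _ hne2 hne
  rw [← hfinal]
  gcongr
end

section
/- Define ℛ : ℝ → ℝ by ℛ(x) = (sin x − x + x³/6)/x³ for x ≠ 0 and ℛ(0) = 0. Then ℛ is continuous on ℝ, and ℛ is increasing in |x|: for all x, y ∈ ℝ with |x| ≤ |y| one has ℛ(x) ≤ ℛ(y). -/
open Real

/-- `ℛ(x) = (sin x − x + x³/6)/x³` for `x ≠ 0`, `ℛ(0) = 0`. -/
noncomputable def Rfun (x : ℝ) : ℝ :=
  if x = 0 then 0 else (Real.sin x - x + x ^ 3 / 6) / x ^ 3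

lemma Rfun_even (x : ℝ) : Rfun (-x) = Rfun x := by
  unfold Rfun
  rcases eq_or_ne x 0 with h | h
  · simp [h]
  · rw [if_neg (neg_ne_zero.mpr h), if_neg h]
    rw [Real.sin_neg]
    ring

lemma Rfun_abs (x : ℝ) : Rfun |x| = Rfun x := by
  rcases abs_choice x with h | h
  · rw [h]
  · rw [h, Rfun_even]

lemma Rfun_cont : Continuous Rfun := by
  rw [continuous_iff_continuousAt]
  intro x
  rcases eq_or_ne x 0 with rfl | hx
  · have h0 : Rfun 0 = 0 := by simp [Rfun]
    rw [ContinuousAt, h0]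
    rw [Metric.tendsto_nhds_nhds]
    intro ε hε
    refine ⟨min 1 (ε / 1), by positivity, fun y hy => ?_⟩
    simp only [Real.dist_eq, sub_zero] at hy ⊢
    rcases eq_or_ne y 0 with rfl | hy0
    · simpa [Rfun] using hε
    · have hy1 : |y| ≤ 1 := le_of_lt (lt_of_lt_of_le hy (min_le_left _ _))
      have hb := Real.sin_bound hy1
      have hnum : |Real.sin y - y + y ^ 3 / 6| ≤ |y| ^ 4 * (5 / 96) := by
        have : Real.sin y - y + y ^ 3 / 6 = Real.sin y - (y - y ^ 3 / 6) := by ring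
        rw [this]; refine hb.trans ?_
        have h4 := pow_nonneg (abs_nonneg y) 4
        have e : |y| ^ 5 = |y| ^ 4 * |y| := by ring
        rw [e]; nlinarith [mul_le_mul_of_nonneg_left hy1 h4]
      have hy3 : |y ^ 3| = |y| ^ 3 := by rw [abs_pow]
      have hRy : |Rfun y| ≤ |y| * (5 / 96) := by
        rw [Rfun, if_neg hy0, abs_div, hy3]
        rw [div_le_iff₀ (by positivity)]
        calc |Real.sin y - y + y ^ 3 / 6| ≤ |y| ^ 4 * (5 / 96) := hnum
          _ = |y| * (5 / 96) * |y| ^ 3 := by ring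
      have : |y| * (5 / 96) < ε := by
        have h1 : |y| < ε := lt_of_lt_of_le hy (by simpa using min_le_right 1 (ε/1))
        nlinarith [abs_nonneg y]
      exact lt_of_le_of_lt hRy this
  · have heq : Rfun =ᶠ[nhds x] fun y => (Real.sin y - y + y ^ 3 / 6) / y ^ 3 := by
      filter_upwards [isOpen_ne.mem_nhds hx] with y hy
      simp [Rfun, hy]
    refine ContinuousAt.congr ?_ heq.symm
    exact ContinuousAt.div (by fun_prop) (by fun_prop) (pow_ne_zero 3 hx)

-- g and its derivatives
lemma hasDerivAt_g (x : ℝ) :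
    HasDerivAt (fun x => x * Real.cos x + 2 * x - 3 * Real.sin x)
      (2 - 2 * Real.cos x - x * Real.sin x) x := by
  have h : HasDerivAt (fun x => x * Real.cos x + 2 * x - 3 * Real.sin x)
      (1 * Real.cos x + x * (-Real.sin x) + 2 - 3 * Real.cos x) x := by
    have := (((hasDerivAt_id x).mul (Real.hasDerivAt_cos x)).add
      ((hasDerivAt_id x).const_mul 2)).sub ((Real.hasDerivAt_sin x).const_mul 3)
    exact this.congr_deriv (by simp only [id]; ring)
  convert h using 1; ring

lemma hasDerivAt_g1 (x : ℝ) :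
    HasDerivAt (fun x => 2 - 2 * Real.cos x - x * Real.sin x)
      (Real.sin x - x * Real.cos x) x := by
  have h : HasDerivAt (fun x => 2 - 2 * Real.cos x - x * Real.sin x)
      (0 - 2 * (-Real.sin x) - (1 * Real.sin x + x * Real.cos x)) x := by
    exact (((hasDerivAt_const x (2:ℝ)).sub ((Real.hasDerivAt_cos x).const_mul 2)).sub
      ((hasDerivAt_id x).mul (Real.hasDerivAt_sin x)))
  convert h using 1; ring

lemma hasDerivAt_g2 (x : ℝ) :
    HasDerivAt (fun x => Real.sin x - x * Real.cos x) (x * Real.sin x) x := by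
  have h : HasDerivAt (fun x => Real.sin x - x * Real.cos x)
      (Real.cos x - (1 * Real.cos x + x * (-Real.sin x))) x :=
    (Real.hasDerivAt_sin x).sub ((hasDerivAt_id x).mul (Real.hasDerivAt_cos x))
  convert h using 1; ring

lemma aux_mono {f f' : ℝ → ℝ} (hd : ∀ x, HasDerivAt f (f' x) x)
    (hpos : ∀ x ∈ Set.Icc (0:ℝ) 3, 0 ≤ f' x) : MonotoneOn f (Set.Icc (0:ℝ) 3) := by
  apply monotoneOn_of_deriv_nonneg (convex_Icc 0 3)
    (fun x _ => (hd x).continuousAt.continuousWithinAt)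
    (fun x hx => ((hd x).differentiableAt).differentiableWithinAt)
  intro x hx
  rw [(hd x).deriv]
  exact hpos x (Set.mem_of_mem_of_subset hx (interior_subset))

lemma g2_nonneg : ∀ x ∈ Set.Icc (0:ℝ) 3, 0 ≤ Real.sin x - x * Real.cos x := by
  have hsin : ∀ x ∈ Set.Icc (0:ℝ) 3, 0 ≤ Real.sin x := fun x hx =>
    Real.sin_nonneg_of_nonneg_of_le_pi hx.1 (hx.2.trans Real.pi_gt_three.le)
  have hm : MonotoneOn (fun x => Real.sin x - x * Real.cos x) (Set.Icc 0 3) :=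
    aux_mono hasDerivAt_g2 (fun x hx => mul_nonneg hx.1 (hsin x hx))
  intro x hx
  have := hm (Set.left_mem_Icc.mpr (by norm_num)) hx hx.1
  simpa using this

lemma g1_nonneg : ∀ x ∈ Set.Icc (0:ℝ) 3, 0 ≤ 2 - 2 * Real.cos x - x * Real.sin x := by
  have hm : MonotoneOn (fun x => 2 - 2 * Real.cos x - x * Real.sin x) (Set.Icc 0 3) :=
    aux_mono hasDerivAt_g1 g2_nonneg
  intro x hx
  have := hm (Set.left_mem_Icc.mpr (by norm_num)) hx hx.1
  simpa using this

lemma g_nonneg : ∀ x : ℝ, 0 ≤ x → 0 ≤ x * Real.cos x + 2 * x - 3 * Real.sin x := by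
  intro x hx0
  rcases le_or_gt x 3 with hx3 | hx3
  · have hm : MonotoneOn (fun x => x * Real.cos x + 2 * x - 3 * Real.sin x) (Set.Icc 0 3) :=
      aux_mono hasDerivAt_g g1_nonneg
    have := hm (Set.left_mem_Icc.mpr (by norm_num)) ⟨hx0, hx3⟩ hx0
    simpa using this
  · have h1 : -1 ≤ Real.cos x := Real.neg_one_le_cos x
    have h2 : Real.sin x ≤ 1 := Real.sin_le_one x
    nlinarith

lemma Rfun_hasDeriv {x : ℝ} (hx : x ≠ 0) :
    HasDerivAt Rfun ((x * Real.cos x + 2 * x - 3 * Real.sin x) / x ^ 4) x := by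
  have heq : Rfun =ᶠ[nhds x] fun y => (Real.sin y - y + y ^ 3 / 6) / y ^ 3 := by
    filter_upwards [isOpen_ne.mem_nhds hx] with y hy
    simp [Rfun, hy]
  refine HasDerivAt.congr_of_eventuallyEq ?_ heq
  have hnum : HasDerivAt (fun y => Real.sin y - y + y ^ 3 / 6)
      (Real.cos x - 1 + 3 * x ^ 2 / 6) x := by
    have h : HasDerivAt (fun y => Real.sin y - y + y ^ 3 / 6)
        (Real.cos x - 1 + (3 * x ^ 2) / 6) x :=
      ((Real.hasDerivAt_sin x).sub (hasDerivAt_id x)).add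
        ((hasDerivAt_pow 3 x).div_const 6)
    convert h using 1 <;> push_cast <;> ring
  have hden : HasDerivAt (fun y : ℝ => y ^ 3) (3 * x ^ 2) x := by
    have := hasDerivAt_pow 3 x
    exact this.congr_deriv (by norm_num)
  have h := hnum.div hden (pow_ne_zero 3 hx)
  refine h.congr_deriv ?_
  field_simp
  ring

lemma Rfun_monoOn : MonotoneOn Rfun (Set.Ici (0:ℝ)) := by
  apply monotoneOn_of_deriv_nonneg (convex_Ici 0) Rfun_cont.continuousOn
  · intro x hx
    rw [interior_Ici] at hx
    exact (Rfun_hasDeriv (ne_of_gt hx)).differentiableAt.differentiableWithinAt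
  · intro x hx
    rw [interior_Ici] at hx
    rw [(Rfun_hasDeriv (ne_of_gt hx)).deriv]
    exact div_nonneg (g_nonneg x hx.le) (by positivity)

/-- `ℛ` is continuous and increasing in `|x|`. -/
theorem statement14 :
    Continuous Rfun ∧ ∀ x y : ℝ, |x| ≤ |y| → Rfun x ≤ Rfun y := by
  refine ⟨Rfun_cont, fun x y h => ?_⟩
  calc Rfun x = Rfun |x| := (Rfun_abs x).symm
    _ ≤ Rfun |y| := Rfun_monoOn (abs_nonneg x) (abs_nonneg y) h
    _ = Rfun y := Rfun_abs y
end

section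
/- For every real w ≥ 0: 8w − 4·sin(2w) − 5w·sin²(w) ≥ 0. -/
open Real

private lemma aux_nonneg (f f' : ℝ → ℝ) (hd : ∀ x, HasDerivAt f (f' x) x)
    (h0 : f 0 = 0) (hf' : ∀ x, 0 ≤ x → 0 ≤ f' x) : ∀ x, 0 ≤ x → 0 ≤ f x := by
  intro x hx
  have hdiff : Differentiable ℝ f := fun y => (hd y).differentiableAt
  have hmono : MonotoneOn f (Set.Ici 0) := by
    apply monotoneOn_of_deriv_nonneg (convex_Ici 0) hdiff.continuous.continuousOn
    · intro y _
      exact (hdiff y).differentiableWithinAt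
    · intro y hy
      rw [(hd y).deriv]
      exact hf' y (le_of_lt (by simpa using hy))
  calc (0:ℝ) = f 0 := h0.symm
    _ ≤ f x := hmono (by simp) (by simpa using hx) hx

private lemma sin_ge_cubic : ∀ x : ℝ, 0 ≤ x → 0 ≤ Real.sin x - (x - x ^ 3 / 6) := by
  apply aux_nonneg _ (fun x => Real.cos x - (1 - x ^ 2 / 2))
  · intro x
    have h2 : HasDerivAt (fun x : ℝ => x - x ^ 3 / 6) (1 - x ^ 2 / 2) x := by
      have := (hasDerivAt_id x).sub ((hasDerivAt_pow 3 x).div_const 6)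
      exact this.congr_deriv (by push_cast; ring)
    exact (Real.hasDerivAt_sin x).sub h2
  · simp
  · intro x _
    have := Real.one_sub_sq_div_two_le_cos (x := x)
    linarith

private lemma cos_le_quartic : ∀ x : ℝ, 0 ≤ x → 0 ≤ 1 - x ^ 2 / 2 + x ^ 4 / 24 - Real.cos x := by
  apply aux_nonneg _ (fun x => Real.sin x - (x - x ^ 3 / 6))
  · intro x
    have h2 : HasDerivAt (fun x : ℝ => 1 - x ^ 2 / 2 + x ^ 4 / 24) (-(x - x ^ 3 / 6) + 0) x := by
      have := (((hasDerivAt_const x (1:ℝ)).sub ((hasDerivAt_pow 2 x).div_const 2)).add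
        ((hasDerivAt_pow 4 x).div_const 24))
      exact this.congr_deriv (by push_cast; ring)
    have := h2.sub (Real.hasDerivAt_cos x)
    exact this.congr_deriv (by ring)
  · simp
  · exact sin_ge_cubic

private lemma sin_le_quintic : ∀ x : ℝ, 0 ≤ x →
    0 ≤ x - x ^ 3 / 6 + x ^ 5 / 120 - Real.sin x := by
  apply aux_nonneg _ (fun x => 1 - x ^ 2 / 2 + x ^ 4 / 24 - Real.cos x)
  · intro x
    have h2 : HasDerivAt (fun x : ℝ => x - x ^ 3 / 6 + x ^ 5 / 120)
        (1 - x ^ 2 / 2 + x ^ 4 / 24) x := by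
      have := ((hasDerivAt_id x).sub ((hasDerivAt_pow 3 x).div_const 6)).add
        ((hasDerivAt_pow 5 x).div_const 120)
      exact this.congr_deriv (by push_cast; ring)
    exact h2.sub (Real.hasDerivAt_sin x)
  · simp
  · exact cos_le_quartic

private lemma cos_ge_sextic : ∀ x : ℝ, 0 ≤ x →
    0 ≤ Real.cos x - (1 - x ^ 2 / 2 + x ^ 4 / 24 - x ^ 6 / 720) := by
  apply aux_nonneg _ (fun x => x - x ^ 3 / 6 + x ^ 5 / 120 - Real.sin x)
  · intro x
    have h2 : HasDerivAt (fun x : ℝ => 1 - x ^ 2 / 2 + x ^ 4 / 24 - x ^ 6 / 720)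
        (-(x - x ^ 3 / 6 + x ^ 5 / 120) + 0) x := by
      have := (((hasDerivAt_const x (1:ℝ)).sub ((hasDerivAt_pow 2 x).div_const 2)).add
        ((hasDerivAt_pow 4 x).div_const 24)).sub ((hasDerivAt_pow 6 x).div_const 720)
      exact this.congr_deriv (by push_cast; ring)
    have := (Real.hasDerivAt_cos x).sub h2
    exact this.congr_deriv (by ring)
  · simp
  · exact sin_le_quintic

/-- For every real `w ≥ 0`: `8w − 4·sin(2w) − 5w·sin²(w) ≥ 0`. -/
theorem statement16 (w : ℝ) (hw : 0 ≤ w) :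
    0 ≤ 8 * w - 4 * Real.sin (2 * w) - 5 * w * Real.sin w ^ 2 := by
  have hsq : Real.sin w ^ 2 = 1 / 2 - Real.cos (2 * w) / 2 := Real.sin_sq_eq_half_sub w
  rw [hsq]
  rcases le_or_gt w (4 / 3) with hcase | hcase
  · -- small case: use Taylor bounds at t = 2w
    have ht : (0:ℝ) ≤ 2 * w := by linarith
    have h5 := sin_le_quintic (2 * w) ht
    have h6 := cos_ge_sextic (2 * w) ht
    have h43 : (0:ℝ) ≤ 4/3 - w := by linarith
    have h43' : (0:ℝ) ≤ 4/3 + w := by linarith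
    nlinarith [mul_nonneg hw h6, pow_nonneg hw 3, pow_nonneg hw 5,
      mul_nonneg (mul_nonneg (pow_nonneg hw 5) h43) h43',
      mul_nonneg (pow_nonneg hw 3) (mul_nonneg h43 h43')]
  · -- large case: crude bounds
    have h1 : Real.sin (2 * w) ≤ 1 := Real.sin_le_one _
    have h2 : -1 ≤ Real.cos (2 * w) := Real.neg_one_le_cos _
    nlinarith
end
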